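/- arXiv:2203.06978 — 5 statements merged into one kernel-verified Lean document; each statement's English description precedes it below -/
import Mathlib

section
/- Let k ≥ 1, d ≥ 4, and n ≥ k(d-1)+2 be integers. Then the maximum number of edges of a simple k-connected graph of order n and diameter d equals ((3d-5)k² + (5-d)k)/2 + C(n-kd+k-2, 2) + 3k(n-kd+k-2), where C(m,2) = m(m-1)/2 denotes the binomial coefficient. That is, every simple k-connected graph of order n and diameter d has at most this many edges, and some simple k-connected graph of order n and diameter d attains this number of edges. -/
/-- A graph is `k`-connected if it has more than `k` vertices and remains connected
whenever fewer than `k` vertices are deleted. -/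
def SimpleGraph.KConnected {V : Type*} [Fintype V] (k : ℕ) (G : SimpleGraph V) : Prop :=
  k < Fintype.card V ∧ ∀ S : Set V, S.ncard < k → (G.induce Sᶜ).Connected

/-!
Fix `u, v` at distance `d` and sort the vertices into the distance layers `L₀, …, L_d` from `u`.
Each middle layer separates `u` from `v`, so it has at least `k` vertices, and every closed
neighbourhood lies in three consecutive layers; hence `2|E| + n ≤ ∑_{|i-j| ≤ 1} |Lᵢ| |Lⱼ|`.
Writing the layer sizes as the profile `1, k, …, k, 1` plus `m = n - k(d-1) - 2` surplus vertices,
the surplus adds at most `3km` twice (against the profile) and `m²` (against itself).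
Equality holds for the graph with layer sizes `1, k, k + m, k, …, k, 1` in which two vertices
are adjacent iff their layers are at most one apart.
-/

open Finset

def bandSum (N : ℕ) (a b : ℕ → ℕ) : ℕ :=
  ∑ i ∈ range N, ∑ j ∈ range N, if i ≤ j + 1 ∧ j ≤ i + 1 then a i * b j else 0

section bandSum

variable {N k s : ℕ} {a b c e : ℕ → ℕ}

lemma bandSum_comm (N : ℕ) (a b : ℕ → ℕ) : bandSum N a b = bandSum N b a := by
  rw [bandSum, sum_comm]
  refine sum_congr rfl fun i _ => sum_congr rfl fun j _ => ?_
  exact if_congr and_comm (mul_comm _ _) rfl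

lemma bandSum_add_left : bandSum N (a + e) b = bandSum N a b + bandSum N e b := by
  simp only [bandSum, ← sum_add_distrib]
  refine sum_congr rfl fun i _ => sum_congr rfl fun j _ => ?_
  split_ifs <;> simp [add_mul]

lemma bandSum_add_right : bandSum N a (b + e) = bandSum N a b + bandSum N a e := by
  rw [bandSum_comm, bandSum_add_left, bandSum_comm N b, bandSum_comm N e]

lemma bandSum_le_sum_mul_sum : bandSum N a b ≤ (∑ i ∈ range N, a i) * ∑ j ∈ range N, b j := by
  rw [sum_mul_sum]
  exact sum_le_sum fun i _ => sum_le_sum fun j _ => by split_ifs <;> simp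

lemma bandSum_le_three_mul_sum (ha : ∀ i, a i ≤ k) :
    bandSum N a b ≤ 3 * k * ∑ j ∈ range N, b j := by
  rw [bandSum, sum_comm, mul_sum]
  gcongr with j _
  have hnear : {i ∈ range N | i ≤ j + 1 ∧ j ≤ i + 1} ⊆ {j - 1, j, j + 1} := by
    intro i hi
    simp only [mem_filter, mem_insert, mem_singleton] at hi ⊢
    omega
  calc ∑ i ∈ range N, (if i ≤ j + 1 ∧ j ≤ i + 1 then a i * b j else 0)
      = (∑ i ∈ range N with i ≤ j + 1 ∧ j ≤ i + 1, a i) * b j := by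
        rw [sum_filter, sum_mul]
        exact sum_congr rfl fun i _ => by split_ifs <;> simp
    _ ≤ (3 * k) * b j := by
        gcongr
        calc _ ≤ #{i ∈ range N | i ≤ j + 1 ∧ j ≤ i + 1} • k :=
              sum_le_card_nsmul _ _ _ fun i _ => ha i
          _ ≤ 3 * k := by
            rw [smul_eq_mul]
            gcongr
            exact (card_le_card hnear).trans card_le_three

lemma bandSum_self_le_add_of_le (hbc : ∀ i, b i ≤ c i) (hbk : ∀ i, b i ≤ k)
    (hs : ∑ i ∈ range N, c i = ∑ i ∈ range N, b i + s) :
    bandSum N c c ≤ bandSum N b b + 6 * k * s + s ^ 2 := by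
  obtain ⟨e, rfl⟩ : ∃ e, c = b + e := ⟨c - b, funext fun i => by simp [hbc i]⟩
  have he : ∑ i ∈ range N, e i = s := by simpa [sum_add_distrib] using hs
  rw [bandSum_add_left, bandSum_add_right, bandSum_add_right, bandSum_comm N e b]
  have hbe := bandSum_le_three_mul_sum (N := N) (b := e) hbk
  have hee := bandSum_le_sum_mul_sum (N := N) (a := e) (b := e)
  rw [he] at hbe hee
  linarith

lemma bandSum_one : bandSum 1 a b = a 0 * b 0 := by simp [bandSum]

lemma bandSum_succ_succ : bandSum (N + 2) a b =
    bandSum (N + 1) a b + a N * b (N + 1) + a (N + 1) * b N + a (N + 1) * b (N + 1) := by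
  have hcol : ∀ g : ℕ → ℕ → ℕ, ∑ i ∈ range (N + 1),
      (if i ≤ N + 1 + 1 ∧ N + 1 ≤ i + 1 then g i (N + 1) else 0) = g N (N + 1) := by
    intro g
    rw [sum_range_succ, sum_eq_zero fun i hi => if_neg (by simp at hi; omega), if_pos (by omega)]
    simp
  have hrow : ∑ j ∈ range (N + 1),
      (if N + 1 ≤ j + 1 ∧ j ≤ N + 1 + 1 then a (N + 1) * b j else 0) = a (N + 1) * b N := by
    simpa only [and_comm] using hcol fun j _ => a (N + 1) * b j
  simp only [bandSum, sum_range_succ _ (N + 1), sum_add_distrib, hrow, hcol fun i j => a i * b j]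
  simp only [le_add_iff_nonneg_right, zero_le, and_self, ↓reduceIte]
  ring

end bandSum

def extremalLayers (k d m i : ℕ) : ℕ :=
  if i = 0 ∨ i = d then 1 else if i = 2 then k + m else if i < d then k else 0

section extremalLayers

variable {k d m i : ℕ}

lemma extremalLayers_le (hk : 1 ≤ k) (i : ℕ) : extremalLayers k d 0 i ≤ k := by
  unfold extremalLayers; split_ifs <;> omega

lemma extremalLayers_of_lt (hi : i < d) (h0 : i ≠ 0) (h2 : i ≠ 2) :
    extremalLayers k d m i = k := by
  unfold extremalLayers; split_ifs <;> omega

lemma extremalLayers_self : extremalLayers k d m d = 1 := by simp [extremalLayers]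

lemma extremalLayers_zero : extremalLayers k d m 0 = 1 := by simp [extremalLayers]

lemma extremalLayers_two (hd : 2 < d) : extremalLayers k d m 2 = k + m := by
  simp [extremalLayers, hd.ne]

lemma sum_extremalLayers (hd : 4 ≤ d) :
    ∑ i ∈ range (d + 1), extremalLayers k d m i = k * (d - 1) + 2 + m := by
  have hprefix : ∀ t, t + 3 < d →
      ∑ i ∈ range (t + 4), extremalLayers k d m i = (t + 3) * k + 1 + m := by
    intro t
    induction t with
    | zero =>
      intro ht
      simp only [sum_range_succ, range_zero, sum_empty]
      rw [extremalLayers_zero, extremalLayers_two (show 2 < d by omega),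
        extremalLayers_of_lt (i := 1) (by omega) (by omega) (by omega),
        extremalLayers_of_lt (i := 3) (by omega) (by omega) (by omega)]
      ring
    | succ t ih =>
      intro ht
      rw [sum_range_succ, ih (by omega), extremalLayers_of_lt (by omega) (by omega) (by omega)]
      ring
  obtain ⟨t, rfl⟩ : ∃ t, d = t + 4 := ⟨d - 4, by omega⟩
  rw [sum_range_succ, hprefix t (by omega), extremalLayers_self, show t + 4 - 1 = t + 3 by omega]
  ring

lemma bandSum_extremalLayers (hd : 4 ≤ d) :
    bandSum (d + 1) (extremalLayers k d m) (extremalLayers k d m)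
      = (3 * d - 5) * k ^ 2 + 4 * k + 2 + 6 * k * m + m ^ 2 := by
  have hprefix : ∀ t, t + 3 < d → bandSum (t + 4) (extremalLayers k d m) (extremalLayers k d m)
      = (3 * t + 7) * k ^ 2 + 2 * k + 1 + 6 * k * m + m ^ 2 := by
    intro t
    induction t with
    | zero =>
      intro ht
      rw [show 0 + 4 = 2 + 2 from rfl, bandSum_succ_succ, bandSum_succ_succ (N := 1),
        bandSum_succ_succ (N := 0), bandSum_one, extremalLayers_zero, extremalLayers_two (by omega),
        extremalLayers_of_lt (i := 1) (by omega) (by omega) (by omega),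
        extremalLayers_of_lt (i := 3) (by omega) (by omega) (by omega)]
      ring
    | succ t ih =>
      intro ht
      rw [bandSum_succ_succ, ih (by omega),
        extremalLayers_of_lt (i := t + 3) (by omega) (by omega) (by omega),
        extremalLayers_of_lt (i := t + 4) (by omega) (by omega) (by omega)]
      ring
  obtain ⟨t, rfl⟩ : ∃ t, d = t + 4 := ⟨d - 4, by omega⟩
  rw [bandSum_succ_succ, hprefix t (by omega), extremalLayers_self,
    extremalLayers_of_lt (i := t + 3) (by omega) (by omega) (by omega)]
  rw [show 3 * (t + 4) - 5 = 3 * t + 7 by omega]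
  ring

end extremalLayers

section levels

variable {V : Type*} [Fintype V]

def levelCount (f : V → ℕ) (i : ℕ) : ℕ := #{x | f x = i}

lemma sum_comp_eq_sum_levelCount {N : ℕ} (f : V → ℕ) (hf : ∀ x, f x < N) (g : ℕ → ℕ) :
    ∑ x, g (f x) = ∑ i ∈ range N, levelCount f i * g i := by
  rw [← sum_fiberwise_of_maps_to (g := f) (t := range N) fun x _ => mem_range.2 (hf x)]
  refine sum_congr rfl fun i _ => ?_
  rw [sum_congr rfl fun x hx => by rw [(mem_filter.1 hx).2], sum_const, smul_eq_mul, levelCount]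

lemma sum_levelCount {N : ℕ} (f : V → ℕ) (hf : ∀ x, f x < N) :
    ∑ i ∈ range N, levelCount f i = Fintype.card V := by
  simpa using (sum_comp_eq_sum_levelCount f hf fun _ => 1).symm

lemma sum_card_near_eq_bandSum {N : ℕ} (f : V → ℕ) (hf : ∀ x, f x < N) :
    ∑ x, #{y | f x ≤ f y + 1 ∧ f y ≤ f x + 1} = bandSum N (levelCount f) (levelCount f) := by
  simp only [card_filter]
  rw [sum_comp_eq_sum_levelCount f hf fun i => ∑ y, if i ≤ f y + 1 ∧ f y ≤ i + 1 then 1 else 0]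
  refine sum_congr rfl fun i _ => ?_
  rw [sum_comp_eq_sum_levelCount f hf fun j => if i ≤ j + 1 ∧ j ≤ i + 1 then 1 else 0, mul_sum]
  refine sum_congr rfl fun j _ => ?_
  split_ifs <;> simp

end levels

namespace SimpleGraph

section edges

variable {V : Type*} [Fintype V] [DecidableEq V] (G : SimpleGraph V) [DecidableRel G.Adj]

lemma two_mul_card_edgeFinset_add_card :
    2 * #G.edgeFinset + Fintype.card V = ∑ x, #{y | x = y ∨ G.Adj x y} := by
  rw [← sum_degrees_eq_twice_card_edges, Fintype.card_eq_sum_ones, ← sum_add_distrib]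
  refine sum_congr rfl fun x _ => ?_
  rw [filter_or, filter_eq, if_pos (mem_univ x), card_union_of_disjoint (by simp), card_singleton,
    ← card_neighborFinset_eq_degree, neighborFinset_eq_filter, add_comm]

lemma two_mul_card_edgeFinset_add_card_le_bandSum {N : ℕ} (f : V → ℕ) (hf : ∀ x, f x < N)
    (hadj : ∀ x y, G.Adj x y → f x ≤ f y + 1 ∧ f y ≤ f x + 1) :
    2 * #G.edgeFinset + Fintype.card V ≤ bandSum N (levelCount f) (levelCount f) := by
  rw [two_mul_card_edgeFinset_add_card, ← sum_card_near_eq_bandSum f hf]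
  refine sum_le_sum fun x _ => card_le_card fun y => ?_
  simp only [mem_filter, mem_univ, true_and]
  rintro (rfl | h)
  · omega
  · exact hadj x y h

end edges

variable {V : Type*}

def levelGraph (f : V → ℕ) : SimpleGraph V where
  Adj x y := x ≠ y ∧ f x ≤ f y + 1 ∧ f y ≤ f x + 1
  symm := ⟨fun _ _ h => ⟨h.1.symm, h.2.2, h.2.1⟩⟩
  loopless := ⟨fun _ h => h.1 rfl⟩

namespace levelGraph

variable {f : V → ℕ}

@[simp]
lemma adj_iff {x y : V} : (levelGraph f).Adj x y ↔ x ≠ y ∧ f x ≤ f y + 1 ∧ f y ≤ f x + 1 :=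
  Iff.rfl

instance [DecidableEq V] : DecidableRel (levelGraph f).Adj :=
  fun x y => inferInstanceAs (Decidable (x ≠ y ∧ f x ≤ f y + 1 ∧ f y ≤ f x + 1))

lemma two_mul_card_edgeFinset_add_card [Fintype V] [DecidableEq V] {N : ℕ}
    (hf : ∀ x, f x < N) :
    2 * #(levelGraph f).edgeFinset + Fintype.card V
      = bandSum N (levelCount f) (levelCount f) := by
  rw [SimpleGraph.two_mul_card_edgeFinset_add_card, ← sum_card_near_eq_bandSum f hf]
  refine sum_congr rfl fun x _ => congrArg card (filter_congr fun y _ => ?_)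
  rw [adj_iff]
  by_cases hxy : x = y
  · subst hxy; simp
  · simp [hxy]

lemma le_add_length {x y : V} (w : (levelGraph f).Walk x y) : f y ≤ f x + w.length := by
  induction w with
  | nil => simp
  | cons h _ ih => rw [Walk.length_cons]; have := (adj_iff.1 h).2.2; omega

lemma exists_walk_length_le {x y : V} (hxy : f x ≤ f y)
    (hocc : ∀ i, f x < i → i < f y → ∃ z, f z = i) :
    ∃ w : (levelGraph f).Walk x y, w.length ≤ max (f y - f x) 1 := by
  induction hn : f y - f x using Nat.strong_induction_on generalizing y with
  | _ n ih =>
    by_cases hclose : f y ≤ f x + 1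
    · by_cases hxy' : x = y
      · subst hxy'; exact ⟨.nil, by simp⟩
      · exact ⟨(adj_iff.2 ⟨hxy', by omega, hclose⟩).toWalk, by simp⟩
    · obtain ⟨z, hz⟩ := hocc (f y - 1) (by omega) (by omega)
      obtain ⟨w, hw⟩ := ih (f z - f x) (by omega) (by omega)
        (fun i h1 h2 => hocc i h1 (by omega)) rfl
      have hzy : (levelGraph f).Adj z y :=
        adj_iff.2 ⟨fun h => by subst h; omega, by omega, by omega⟩
      exact ⟨w.concat hzy, by rw [Walk.length_concat]; omega⟩

lemma induce_eq (s : Set V) : (levelGraph f).induce s = levelGraph fun x : s => f x := by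
  ext x y
  simp [Subtype.ext_iff]

section finite

variable [Fintype V] {d : ℕ}

lemma induce_compl_connected {k : ℕ} {S : Set V} (hf : ∀ x, f x ≤ d) (hd : 1 < d)
    (hlev : ∀ i, 0 < i → i < d → k ≤ levelCount f i) (hS : S.ncard < k) :
    ((levelGraph f).induce Sᶜ).Connected := by
  have hocc : ∀ i, 0 < i → i < d → ∃ z : ↥Sᶜ, f z = i := by
    intro i hi0 hid
    obtain ⟨z, hz, hzS⟩ := Set.exists_mem_notMem_of_ncard_lt_ncard (s := S)
      (t := ↑({x | f x = i} : Finset V))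
      (by rw [Set.ncard_coe_finset]; exact hS.trans_le (hlev i hi0 hid))
    exact ⟨⟨z, hzS⟩, by simpa using hz⟩
  have : Nonempty ↥Sᶜ := (hocc 1 one_pos hd).nonempty
  rw [induce_eq, connected_iff]
  refine ⟨fun x y => ?_, this⟩
  wlog hxy : f x ≤ f y generalizing x y
  · exact (this y x (by omega)).symm
  obtain ⟨w, -⟩ := exists_walk_length_le (f := fun x : ↥Sᶜ => f x) hxy
    fun i hi1 hi2 => hocc i (by omega) (by have := hf y; omega)
  exact w.reachable

lemma diam_eq (hf : ∀ x, f x ≤ d) (hocc : ∀ i ≤ d, ∃ z, f z = i) (hd : 1 ≤ d) :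
    (levelGraph f).diam = d := by
  have hwalk : ∀ x y, ∃ w : (levelGraph f).Walk x y, w.length ≤ d := by
    intro x y
    wlog hxy : f x ≤ f y generalizing x y
    · obtain ⟨w, hw⟩ := this y x (by omega)
      exact ⟨w.reverse, by rwa [Walk.length_reverse]⟩
    obtain ⟨w, hw⟩ := exists_walk_length_le hxy fun i _ hi => hocc i (by have := hf y; omega)
    exact ⟨w, hw.trans (max_le (by have := hf y; omega) hd)⟩
  obtain ⟨u, hu⟩ := hocc 0 (Nat.zero_le d)
  obtain ⟨v, hv⟩ := hocc d le_rfl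
  have : Nonempty V := ⟨u⟩
  have hconn : (levelGraph f).Connected :=
    (connected_iff _).2 ⟨fun x y => (hwalk x y).elim fun w _ => w.reachable, ⟨u⟩⟩
  apply le_antisymm
  · obtain ⟨x, y, hxy⟩ := (levelGraph f).exists_dist_eq_diam
    obtain ⟨w, hw⟩ := hwalk x y
    exact hxy ▸ (dist_le w).trans hw
  · obtain ⟨w, hw⟩ := hconn.exists_walk_length_eq_dist u v
    calc d ≤ w.length := by have := le_add_length w; omega
      _ = (levelGraph f).dist u v := hw
      _ ≤ (levelGraph f).diam := dist_le_diam (connected_iff_ediam_ne_top.1 hconn)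

end finite

end levelGraph

variable [Fintype V] {G : SimpleGraph V} {k d m : ℕ}

lemma le_levelCount_dist (hconn : ∀ S : Set V, S.ncard < k → (G.induce Sᶜ).Connected)
    {u v : V} {i : ℕ} (hi : 0 < i) (hiv : i < G.dist u v) : k ≤ levelCount (G.dist u) i := by
  by_contra! hlt
  set L : Finset V := {x | G.dist u x = i}
  have hu : u ∈ (↑L : Set V)ᶜ := by simp [L]; omega
  have hv : v ∈ (↑L : Set V)ᶜ := by simp [L]; omega
  obtain ⟨w⟩ := (hconn L (by rwa [Set.ncard_coe_finset])).preconnected ⟨u, hu⟩ ⟨v, hv⟩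
  -- a walk avoiding layer `i` would have to step from distance `< i` to distance `> i`
  obtain ⟨⟨⟨a, b⟩, hab⟩, -, ha, hb⟩ :=
    w.exists_boundary_dart {x | G.dist u x < i} (by simpa using hi) (by simp; omega)
  simp only [Set.mem_ofPred_eq, not_lt] at ha hb
  have := (show G.Adj a b from hab).diff_dist_adj (u := u)
  exact b.2 (by simp [L]; omega)

lemma two_mul_ncard_edgeSet_add_card_le
    (hk : 1 ≤ k) (hd : 4 ≤ d)
    (hconn : ∀ S : Set V, S.ncard < k → (G.induce Sᶜ).Connected)
    (hcard : Fintype.card V = k * (d - 1) + 2 + m) (hdiam : G.diam = d) :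
    2 * G.edgeSet.ncard + Fintype.card V
      ≤ (3 * d - 5) * k ^ 2 + 4 * k + 2 + 6 * k * m + m ^ 2 := by
  classical
  have : Nonempty V := Fintype.card_pos_iff.1 (by omega)
  obtain ⟨u, v, huv⟩ := G.exists_dist_eq_diam
  rw [hdiam] at huv
  have hf : ∀ x, G.dist u x < d + 1 := fun x =>
    Nat.lt_succ_of_le (hdiam ▸ G.dist_le_diam (G.ediam_ne_top_of_diam_ne_zero (by omega)))
  have hlayers : ∀ i, extremalLayers k d 0 i ≤ levelCount (G.dist u) i := by
    intro i
    unfold extremalLayers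
    split_ifs with h0 h2 hid
    · obtain rfl | rfl := h0
      · exact card_pos.2 ⟨u, by simp⟩
      · exact card_pos.2 ⟨v, by simp [huv]⟩
    · exact le_levelCount_dist hconn (v := v) (by omega) (by omega)
    · exact le_levelCount_dist hconn (v := v) (by omega) (by omega)
    · exact Nat.zero_le _
  have hsum : ∑ i ∈ range (d + 1), levelCount (G.dist u) i
      = ∑ i ∈ range (d + 1), extremalLayers k d 0 i + m := by
    rw [sum_levelCount _ hf, sum_extremalLayers hd, hcard]
  calc 2 * G.edgeSet.ncard + Fintype.card V
      ≤ bandSum (d + 1) (levelCount (G.dist u)) (levelCount (G.dist u)) := by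
        rw [← coe_edgeFinset, Set.ncard_coe_finset]
        refine G.two_mul_card_edgeFinset_add_card_le_bandSum _ hf fun x y hxy => ?_
        have := hxy.diff_dist_adj (u := u)
        omega
    _ ≤ bandSum (d + 1) (extremalLayers k d 0) (extremalLayers k d 0) + 6 * k * m + m ^ 2 :=
        bandSum_self_le_add_of_le hlayers (extremalLayers_le hk) hsum
    _ = (3 * d - 5) * k ^ 2 + 4 * k + 2 + 6 * k * m + m ^ 2 := by
        rw [bandSum_extremalLayers hd]; ring

lemma levelCount_sigma_fst {β : Fin (d + 1) → Type*} [∀ i, Fintype (β i)] (i : ℕ) :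
    levelCount (fun x : Σ j, β j => (x.1 : ℕ)) i
      = if h : i < d + 1 then Fintype.card (β ⟨i, h⟩) else 0 := by
  split_ifs with hi
  · rw [levelCount, ← Fintype.card_congr (Equiv.sigmaSubtype (⟨i, hi⟩ : Fin (d + 1))),
      Fintype.card_subtype]
    congr 1
    ext x
    simp [Fin.ext_iff]
  · exact card_eq_zero.2 (filter_eq_empty_iff.2 fun x _ => by
      change (x.1 : ℕ) ≠ i; have := x.1.2; omega)

lemma exists_extremal_graph (hk : 1 ≤ k) (hd : 4 ≤ d) (m : ℕ) :
    ∃ (V : Type) (_ : Fintype V) (G : SimpleGraph V), G.KConnected k ∧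
      Fintype.card V = k * (d - 1) + 2 + m ∧ G.diam = d ∧
      2 * G.edgeSet.ncard + Fintype.card V
        = (3 * d - 5) * k ^ 2 + 4 * k + 2 + 6 * k * m + m ^ 2 := by
  classical
  set V := Σ i : Fin (d + 1), Fin (extremalLayers k d m i)
  set f : V → ℕ := fun x => x.1
  have hf : ∀ x, f x < d + 1 := fun x => x.1.2
  have hlev : levelCount f = extremalLayers k d m := by
    funext i
    rw [levelCount_sigma_fst]
    split_ifs with hi
    · exact Fintype.card_fin _
    · unfold extremalLayers; split_ifs <;> omega
  have hcard : Fintype.card V = k * (d - 1) + 2 + m := by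
    rw [← sum_levelCount f hf, hlev, sum_extremalLayers hd]
  have hocc : ∀ i ≤ d, ∃ x : V, f x = i := fun i hi =>
    ⟨⟨⟨i, by omega⟩, ⟨0, by unfold extremalLayers; split_ifs <;> omega⟩⟩, rfl⟩
  have hkV : k < Fintype.card V := by
    rw [hcard]; nlinarith [Nat.le_mul_of_pos_right k (by omega : 0 < d - 1)]
  refine ⟨V, inferInstance, levelGraph f, ⟨hkV, fun S hS => ?_⟩, hcard,
    levelGraph.diam_eq (fun x => Nat.lt_succ_iff.1 (hf x)) hocc (by omega), ?_⟩
  · refine levelGraph.induce_compl_connected (fun x => Nat.lt_succ_iff.1 (hf x)) (by omega)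
      (fun i hi0 hid => ?_) hS
    rw [hlev]
    unfold extremalLayers; split_ifs <;> omega
  · rw [← coe_edgeFinset, Set.ncard_coe_finset, levelGraph.two_mul_card_edgeFinset_add_card hf,
      hlev, bandSum_extremalLayers hd]

end SimpleGraph

lemma two_mul_edgeBound_add {k d m n : ℕ} (hd : 2 ≤ d) (hn : n = k * (d - 1) + 2 + m) :
    2 * (((3 * (d : ℤ) - 5) * (k : ℤ) ^ 2 + (5 - (d : ℤ)) * (k : ℤ)) / 2
      + ((n : ℤ) - k * d + k - 2) * (((n : ℤ) - k * d + k - 2) - 1) / 2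
      + 3 * (k : ℤ) * ((n : ℤ) - k * d + k - 2)) + n
      = (((3 * d - 5) * k ^ 2 + 4 * k + 2 + 6 * k * m + m ^ 2 : ℕ) : ℤ) := by
  have hm : (n : ℤ) - k * d + k - 2 = m := by
    rw [hn]; push_cast [Nat.cast_sub (by omega : 1 ≤ d)]; ring
  have hk : (2 : ℤ) ∣ (3 * d - 5) * k ^ 2 + (5 - d) * k := by
    rw [show (3 * d - 5 : ℤ) * k ^ 2 + (5 - d) * k = (3 * d - 5) * (k * (k - 1)) + 2 * (d * k) by
      ring]
    exact dvd_add (dvd_mul_of_dvd_right (Int.even_mul_pred_self k).two_dvd _) (dvd_mul_right 2 _)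
  rw [hm, hn, mul_add, mul_add, Int.mul_ediv_cancel' hk,
    Int.mul_ediv_cancel' (Int.even_mul_pred_self m).two_dvd]
  push_cast [Nat.cast_sub (by omega : 1 ≤ d), Nat.cast_sub (by omega : 5 ≤ 3 * d)]
  ring

/-- Ore's theorem, case `d ≥ 4`: the maximum size of a simple `k`-connected graph of
order `n` and diameter `d` equals
`((3d-5)k² + (5-d)k)/2 + C(n-kd+k-2, 2) + 3k(n-kd+k-2)`. -/
theorem max_size_kConnected_diam_ge_four (k d n : ℕ) (hk : 1 ≤ k) (hd : 4 ≤ d)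
    (hn : k * (d - 1) + 2 ≤ n) :
    (∀ (V : Type) [Fintype V] (G : SimpleGraph V),
        G.KConnected k → Fintype.card V = n → G.diam = d →
        (G.edgeSet.ncard : ℤ) ≤
          ((3 * (d : ℤ) - 5) * (k : ℤ) ^ 2 + (5 - (d : ℤ)) * (k : ℤ)) / 2
            + ((n : ℤ) - k * d + k - 2) * (((n : ℤ) - k * d + k - 2) - 1) / 2
            + 3 * (k : ℤ) * ((n : ℤ) - k * d + k - 2)) ∧
    (∃ (V : Type) (_ : Fintype V) (G : SimpleGraph V),
        G.KConnected k ∧ Fintype.card V = n ∧ G.diam = d ∧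
        (G.edgeSet.ncard : ℤ) =
          ((3 * (d : ℤ) - 5) * (k : ℤ) ^ 2 + (5 - (d : ℤ)) * (k : ℤ)) / 2
            + ((n : ℤ) - k * d + k - 2) * (((n : ℤ) - k * d + k - 2) - 1) / 2
            + 3 * (k : ℤ) * ((n : ℤ) - k * d + k - 2)) := by
  obtain ⟨m, hm⟩ : ∃ m, n = k * (d - 1) + 2 + m := ⟨n - (k * (d - 1) + 2), by omega⟩
  have hbound := two_mul_edgeBound_add (by omega : 2 ≤ d) hm
  push_cast at hbound
  refine ⟨fun V _ G hG hcard hdiam => ?_, ?_⟩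
  · have hle := G.two_mul_ncard_edgeSet_add_card_le hk hd hG.2 (hcard.trans hm) hdiam
    rw [hcard] at hle
    zify at hle
    linarith
  · obtain ⟨V, _, G, hG, hcard, hdiam, hedges⟩ := SimpleGraph.exists_extremal_graph hk hd m
    rw [← hm] at hcard
    refine ⟨V, inferInstance, G, hG, hcard, hdiam, ?_⟩
    rw [hcard] at hedges
    zify at hedges
    linarith
end

section
/- Let k ≥ 1, d ∈ {2, 3}, and n ≥ k(d-1)+2 be integers. Then the maximum number of edges of a simple k-connected graph of order n and diameter d equals ((3d-5)k² + (5-d)k)/2 + C(n-kd+k-2, 2) + ((d-1)k+4-d)(n-kd+k-2), where C(m,2) = m(m-1)/2 denotes the binomial coefficient. That is, every simple k-connected graph of order n and diameter d has at most this many edges, and some simple k-connected graph of order n and diameter d attains this number of edges. -/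
namespace SimpleGraph

variable {V : Type*} (G : SimpleGraph V)

theorem ncard_edgeSet_add_ncard_edgeSet_compl [Fintype V] :
    G.edgeSet.ncard + Gᶜ.edgeSet.ncard = (Fintype.card V).choose 2 := by
  classical
  rw [← Set.ncard_union_eq (disjoint_edgeSet.mpr disjoint_compl_right), ← edgeSet_sup,
    sup_compl_eq_top, ← card_edgeFinset_top_eq_card_choose_two, Set.ncard_eq_toFinset_card']
  rfl

variable {G}

theorem one_le_ncard_edgeSet_compl_of_two_le_dist [Finite V] {u v : V} (h : 2 ≤ G.dist u v) :
    1 ≤ Gᶜ.edgeSet.ncard := by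
  have hne : u ≠ v := by rintro rfl; simp at h
  have hnadj : ¬G.Adj u v := fun hadj => by rw [dist_eq_one_iff_adj.mpr hadj] at h; omega
  exact (Set.ncard_pos).mpr ⟨s(u, v), by simp [hne, hnadj]⟩

theorem card_sub_one_le_ncard_edgeSet_compl_of_three_le_dist [Fintype V] {u v : V}
    (h : 3 ≤ G.dist u v) : Fintype.card V - 1 ≤ Gᶜ.edgeSet.ncard := by
  have hne : u ≠ v := by rintro rfl; simp at h
  have hnadj : ¬G.Adj u v := fun hadj => by rw [dist_eq_one_iff_adj.mpr hadj] at h; omega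
  have hpath : ∀ w, G.Adj u w → ¬G.Adj w v := fun w huw hwv => by
    have := G.dist_le (.cons huw (.cons hwv .nil))
    simp only [Walk.length_cons, Walk.length_nil] at this
    omega
  -- every `w ≠ u` misses `u` or `v`, which yields `n - 1` distinct non-edges
  classical
  let f : V → Sym2 V := fun w => if G.Adj u w then s(w, v) else s(w, u)
  have hmaps : Set.MapsTo f {u}ᶜ Gᶜ.edgeSet := by
    intro w (hw : w ≠ u)
    by_cases huw : G.Adj u w
    · simp [f, huw, hpath w huw, show w ≠ v by rintro rfl; exact hnadj huw]
    · simp [f, huw, hw, G.adj_comm w u]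
  have hinj : Set.InjOn f {u}ᶜ := by
    intro a (ha : a ≠ u) b (hb : b ≠ u) hab
    simp only [f] at hab
    split_ifs at hab <;> grind [Sym2.eq_iff]
  calc Fintype.card V - 1 = ({u}ᶜ : Set V).ncard := by
        rw [Set.ncard_compl, Set.ncard_singleton, Nat.card_eq_fintype_card]
    _ ≤ _ := Set.ncard_le_ncard_of_injOn f hmaps hinj

theorem le_ncard_edgeSet_compl_of_diam [Fintype V] {d : ℕ} (hd : d = 2 ∨ d = 3)
    (h : G.diam = d) : 1 + (d - 2) * (Fintype.card V - 2) ≤ Gᶜ.edgeSet.ncard := by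
  have : Nontrivial V := G.nontrivial_of_diam_ne_zero (by omega)
  have hV := Fintype.one_lt_card (α := V)
  obtain ⟨u, v, huv⟩ := G.exists_dist_eq_diam
  rcases hd with rfl | rfl
  · simpa using one_le_ncard_edgeSet_compl_of_two_le_dist (G := G) (by omega : 2 ≤ G.dist u v)
  · have := card_sub_one_le_ncard_edgeSet_compl_of_three_le_dist (by omega : 3 ≤ G.dist u v)
    omega

theorem sub_le_edist_of_adj_le_add_one (c : V → ℕ)
    (hc : ∀ x y, G.Adj x y → c y ≤ c x + 1) (u v : V) : ((c v - c u : ℕ) : ℕ∞) ≤ G.edist u v := by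
  have hwalk : ∀ {x y : V} (p : G.Walk x y), c y ≤ c x + p.length := by
    intro x y p
    induction p with
    | nil => simp
    | cons h _ ih => have := hc _ _ h; simp only [Walk.length_cons]; omega
  rw [edist_eq_sInf]
  exact le_sInf fun _ ⟨p, hp⟩ => hp ▸ Nat.cast_le.mpr (by have := hwalk p; omega)

/-- The sequential join of the cliques `c ⁻¹' {i}`, `i = 0, 1, 2, …`. -/
def layered (c : V → ℕ) : SimpleGraph V where
  Adj x y := x ≠ y ∧ c x ≤ c y + 1 ∧ c y ≤ c x + 1
  symm.symm _ _ h := ⟨h.1.symm, h.2.2, h.2.1⟩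
  loopless.irrefl _ h := h.1 rfl

variable {c : V → ℕ}

@[simp]
theorem layered_adj {x y : V} : (layered c).Adj x y ↔ x ≠ y ∧ c x ≤ c y + 1 ∧ c y ≤ c x + 1 :=
  Iff.rfl

theorem layered_edist_le {x y : V} (hlev : ∀ i < c y, ∃ z, c z = i) (hxy : c x < c y) :
    (layered c).edist x y ≤ (c y - c x : ℕ) := by
  obtain ⟨m, hm⟩ := Nat.exists_eq_add_of_lt hxy
  induction m generalizing y with
  | zero =>
    have hadj : (layered c).Adj x y :=
      layered_adj.mpr ⟨fun h => by subst h; omega, by omega, by omega⟩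
    rw [edist_eq_one_iff_adj.mpr hadj]
    simp [hm]
  | succ m ih =>
    obtain ⟨z, hz⟩ := hlev (c x + m + 1) (by omega)
    have hzy : (layered c).edist z y = 1 :=
      edist_eq_one_iff_adj.mpr (layered_adj.mpr ⟨fun h => by subst h; omega, by omega, by omega⟩)
    calc (layered c).edist x y ≤ (layered c).edist x z + (layered c).edist z y :=
          SimpleGraph.edist_triangle
      _ ≤ (c z - c x : ℕ) + 1 := by
          rw [hzy]; gcongr; exact ih (fun i hi => hlev i (by omega)) (by omega) hz
      _ = (c y - c x : ℕ) := by rw [hz, hm]; norm_cast; omega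

theorem layered_diam {D : ℕ} (hD : 1 ≤ D) (hle : ∀ x, c x ≤ D) (hlev : ∀ i ≤ D, ∃ x, c x = i) :
    (layered c).diam = D := by
  have hlt : ∀ x y, c x < c y → (layered c).edist x y ≤ D := fun x y h =>
    (layered_edist_le (fun i hi => hlev i (by have := hle y; omega)) h).trans
      (Nat.cast_le.mpr (by have := hle y; omega))
  obtain ⟨u, hu⟩ := hlev 0 (Nat.zero_le _)
  obtain ⟨v, hv⟩ := hlev D le_rfl
  have hediam : (layered c).ediam = D := by
    refine le_antisymm (ediam_le_of_edist_le fun x y => ?_) ?_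
    · rcases lt_trichotomy (c x) (c y) with h | h | h
      · exact hlt x y h
      · refine (edist_le_one_iff_adj_or_eq.mpr ?_).trans (Nat.one_le_cast.mpr hD)
        by_cases hxy : x = y
        · exact .inr hxy
        · exact .inl (layered_adj.mpr ⟨hxy, by omega, by omega⟩)
      · rw [edist_comm]; exact hlt y x h
    · calc (D : ℕ∞) = (c v - c u : ℕ) := by rw [hu, hv, Nat.sub_zero]
        _ ≤ (layered c).edist u v :=
          sub_le_edist_of_adj_le_add_one c (fun _ _ h => (layered_adj.mp h).2.2) u v
        _ ≤ (layered c).ediam := edist_le_ediam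
  rw [diam, hediam, ENat.toNat_natCast]

theorem layered_induce_compl_connected [Finite V] {D k : ℕ} (hD : 2 ≤ D) (hle : ∀ x, c x ≤ D)
    (hlev : ∀ i, 1 ≤ i → i < D → k ≤ {x | c x = i}.ncard) {S : Set V} (hS : S.ncard < k) :
    ((layered c).induce Sᶜ).Connected := by
  have hsurv : ∀ i, 1 ≤ i → i < D → ∃ z ∈ Sᶜ, c z = i := fun i h1 h2 => by
    obtain ⟨z, hz, hzS⟩ := Set.exists_mem_notMem_of_ncard_lt_ncard (hS.trans_le (hlev i h1 h2))
    exact ⟨z, hzS, hz⟩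
  obtain ⟨a, ha, hca⟩ := hsurv 1 le_rfl (by omega)
  have hadj : ∀ x (hx : x ∈ Sᶜ) y (hy : y ∈ Sᶜ), x ≠ y → c x ≤ c y + 1 → c y ≤ c x + 1 →
      ((layered c).induce Sᶜ).Reachable ⟨x, hx⟩ ⟨y, hy⟩ :=
    fun _ _ _ _ h₁ h₂ h₃ => Adj.reachable (induce_adj.mpr (layered_adj.mpr ⟨h₁, h₂, h₃⟩))
  -- climb down one level at a time through surviving vertices until level one is reached
  have hreach : ∀ x (hx : x ∈ Sᶜ), ((layered c).induce Sᶜ).Reachable ⟨x, hx⟩ ⟨a, ha⟩ := by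
    intro x hx
    induction hcx : c x using Nat.strong_induction_on generalizing x with
    | _ m ih =>
      by_cases hm : m ≤ 1
      · by_cases hxa : x = a
        · subst hxa; rfl
        · exact hadj x hx a ha hxa (by omega) (by omega)
      · obtain ⟨z, hz, hcz⟩ := hsurv (m - 1) (by omega) (by have := hle x; omega)
        exact (hadj x hx z hz (fun h => by subst h; omega) (by omega) (by omega)).trans
          (ih (m - 1) (by omega) z hz hcz)
  exact connected_iff _ |>.mpr ⟨fun x y => (hreach x x.2).trans (hreach y y.2).symm, ⟨⟨a, ha⟩⟩⟩

theorem compl_layered_adj {x y : V} :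
    (layered c)ᶜ.Adj x y ↔ x ≠ y ∧ (c x + 2 ≤ c y ∨ c y + 2 ≤ c x) := by
  by_cases h : x = y
  · simp [h]
  · simp only [compl_adj, layered_adj, ne_eq, h, not_false_eq_true, true_and]
    omega

theorem ncard_edgeSet_compl_layered_le_one {u v : V} (hle : ∀ x, c x ≤ 2)
    (hu : ∀ x, c x = 0 → x = u) (hv : ∀ x, c x = 2 → x = v) :
    (layered c)ᶜ.edgeSet.ncard ≤ 1 := by
  have hsub : (layered c)ᶜ.edgeSet ⊆ {s(u, v)} := by
    rintro ⟨x, y⟩ h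
    rw [mem_edgeSet, compl_layered_adj] at h
    rcases h.2 with h | h
    · rw [hu x (by have := hle y; omega), hv y (by have := hle y; omega)]; rfl
    · rw [hu y (by have := hle x; omega), hv x (by have := hle x; omega), Sym2.eq_swap]; rfl
  exact (Set.ncard_le_ncard hsub).trans (Set.ncard_singleton _).le

theorem ncard_edgeSet_compl_layered_le_card_sub_one [Fintype V] {u v : V} (hle : ∀ x, c x ≤ 3)
    (hu : ∀ x, c x = 0 ↔ x = u) (hv : ∀ x, c x = 3 → x = v) :
    (layered c)ᶜ.edgeSet.ncard ≤ Fintype.card V - 1 := by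
  classical
  -- a non-edge joins `u` to a vertex of level `≥ 2`, or `v` to one of level `≤ 1`
  let f : V → Sym2 V := fun w => if c w ≤ 1 then s(w, v) else s(u, w)
  have hcu := (hu u).mpr rfl
  have hf : ∀ x y, c x + 2 ≤ c y → s(x, y) ∈ f '' {u}ᶜ := by
    intro x y h
    by_cases hx : c x = 0
    · refine ⟨y, fun hy => by subst hy; omega, ?_⟩
      simp [f, (hu x).mp hx, show ¬c y ≤ 1 by omega]
    · refine ⟨x, fun hx' => hx ((hu x).mpr hx'), ?_⟩
      simp [f, show c x ≤ 1 by have := hle y; omega, hv y (by have := hle y; omega)]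
  have hsub : (layered c)ᶜ.edgeSet ⊆ f '' {u}ᶜ := by
    rintro ⟨x, y⟩ h
    rw [mem_edgeSet, compl_layered_adj] at h
    rcases h.2 with h | h
    · exact hf x y h
    · show s(x, y) ∈ _
      rw [Sym2.eq_swap]; exact hf y x h
  calc (layered c)ᶜ.edgeSet.ncard ≤ (f '' {u}ᶜ).ncard := Set.ncard_le_ncard hsub
    _ ≤ ({u}ᶜ : Set V).ncard := Set.ncard_image_le
    _ = Fintype.card V - 1 := by
      rw [Set.ncard_compl, Set.ncard_singleton, Nat.card_eq_fintype_card]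

end SimpleGraph

/-- Levels of `K₁ ∨ K_{n-2} ∨ K₁` for `d = 2` and of `K₁ ∨ K_k ∨ K_{n-k-2} ∨ K₁` for `d = 3`. -/
def oreLevel (k d n : ℕ) (x : Fin n) : ℕ :=
  if x.val = 0 then 0 else if x.val = n - 1 then d else if x.val ≤ k then 1 else d - 1

section oreLevel

variable {k d n : ℕ}

theorem oreLevel_le (hd : 1 ≤ d) (x : Fin n) : oreLevel k d n x ≤ d := by
  unfold oreLevel; split_ifs <;> omega

theorem oreLevel_eq_zero_iff (hd : 2 ≤ d) {x : Fin n} : oreLevel k d n x = 0 ↔ x.val = 0 := by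
  unfold oreLevel; grind

theorem oreLevel_eq_self_iff (hd : 2 ≤ d) (hn : 2 ≤ n) {x : Fin n} :
    oreLevel k d n x = d ↔ x.val = n - 1 := by
  unfold oreLevel; grind

theorem le_ncard_oreLevel_eq (hd : d = 2 ∨ d = 3) (hn : k * (d - 1) + 2 ≤ n) {i : ℕ}
    (hi₁ : 1 ≤ i) (hi₂ : i < d) : k ≤ {x | oreLevel k d n x = i}.ncard := by
  -- level `i` contains the block of vertices `(i - 1) k < x ≤ i k`
  obtain ⟨a, ha, hblock⟩ : ∃ a, a + k < n ∧
      ∀ x : Fin n, a < x.val → x.val ≤ a + k → oreLevel k d n x = i := by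
    rcases hd with rfl | rfl
    · exact ⟨0, by omega, fun x h₁ h₂ => by unfold oreLevel; split_ifs <;> omega⟩
    · obtain rfl | rfl : i = 1 ∨ i = 2 := by omega
      · exact ⟨0, by omega, fun x h₁ h₂ => by unfold oreLevel; split_ifs <;> omega⟩
      · exact ⟨k, by omega, fun x h₁ h₂ => by unfold oreLevel; split_ifs <;> omega⟩
  calc k = (Set.Ioc (⟨a, by omega⟩ : Fin n) ⟨a + k, ha⟩).ncard := by
        rw [← Finset.coe_Ioc, Set.ncard_coe_finset, Fin.card_Ioc]; simp
    _ ≤ _ := Set.ncard_le_ncard fun x hx => hblock x hx.1 hx.2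

end oreLevel

theorem exists_kConnected_diam_ncard_edgeSet_compl_le {k d n : ℕ} (hk : 1 ≤ k)
    (hd : d = 2 ∨ d = 3) (hn : k * (d - 1) + 2 ≤ n) :
    ∃ G : SimpleGraph (Fin n), G.KConnected k ∧ G.diam = d ∧
      Gᶜ.edgeSet.ncard ≤ 1 + (d - 2) * (n - 2) := by
  have hkn : k + 2 ≤ n := by rcases hd with rfl | rfl <;> omega
  have hd₁ : 1 ≤ d := by omega
  have hd₂ : 2 ≤ d := by omega
  have hinner : ∀ i, 1 ≤ i → i < d → k ≤ {x | oreLevel k d n x = i}.ncard :=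
    fun _ => le_ncard_oreLevel_eq hd hn
  have hu : ∀ x : Fin n, oreLevel k d n x = 0 ↔ x = ⟨0, by omega⟩ :=
    fun _ => by rw [oreLevel_eq_zero_iff hd₂, Fin.ext_iff]
  have hv : ∀ x : Fin n, oreLevel k d n x = d ↔ x = ⟨n - 1, by omega⟩ :=
    fun _ => by rw [oreLevel_eq_self_iff hd₂ (by omega), Fin.ext_iff]
  have hlev : ∀ i ≤ d, ∃ x, oreLevel k d n x = i := by
    intro i hi
    obtain rfl | hi₀ := Nat.eq_zero_or_pos i
    · exact ⟨_, (hu _).mpr rfl⟩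
    obtain rfl | hid := eq_or_lt_of_le hi
    · exact ⟨_, (hv _).mpr rfl⟩
    have := hinner i hi₀ hid
    exact Set.nonempty_of_ncard_ne_zero (s := {x | oreLevel k d n x = i}) (by omega)
  refine ⟨SimpleGraph.layered (oreLevel k d n),
    ⟨by simp only [Fintype.card_fin]; omega, fun S hS =>
      SimpleGraph.layered_induce_compl_connected hd₂ (oreLevel_le hd₁) hinner hS⟩,
    SimpleGraph.layered_diam hd₁ (oreLevel_le hd₁) hlev, ?_⟩
  rcases hd with rfl | rfl
  · simpa using SimpleGraph.ncard_edgeSet_compl_layered_le_one (oreLevel_le hd₁)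
      (fun x => (hu x).mp) (fun x => (hv x).mp)
  · have := SimpleGraph.ncard_edgeSet_compl_layered_le_card_sub_one (oreLevel_le hd₁) hu
      (fun x => (hv x).mp)
    rw [Fintype.card_fin] at this
    omega

theorem ore_bound_eq_choose_two_sub {k d n : ℕ} (hd : d = 2 ∨ d = 3) (hn : 2 ≤ n) :
    ((3 * (d : ℤ) - 5) * (k : ℤ) ^ 2 + (5 - (d : ℤ)) * (k : ℤ)) / 2
      + ((n : ℤ) - k * d + k - 2) * (((n : ℤ) - k * d + k - 2) - 1) / 2
      + (((d : ℤ) - 1) * k + 4 - (d : ℤ)) * ((n : ℤ) - k * d + k - 2)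
      = (n.choose 2 : ℤ) - (1 + (d - 2) * (n - 2) : ℕ) := by
  have hchoose : 2 * (n.choose 2 : ℤ) = n * (n - 1) := by
    have : n.choose 2 * 2 = n * (n - 1) := by
      rw [Nat.choose_two_right, Nat.div_mul_cancel (Nat.even_mul_pred_self n).two_dvd]
    have := congrArg (Nat.cast : ℕ → ℤ) this
    push_cast [Nat.cast_sub (by omega : 1 ≤ n)] at this
    linarith
  obtain ⟨a, ha⟩ := Int.even_mul_succ_self (k : ℤ)
  obtain ⟨b, hb⟩ := Int.even_mul_succ_self ((n : ℤ) - k * d + k - 3)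
  have hm : ((n : ℤ) - k * d + k - 2) * (((n : ℤ) - k * d + k - 2) - 1) = 2 * b := by
    linear_combination hb
  rw [hm, Int.mul_ediv_cancel_left _ two_ne_zero]
  rcases hd with rfl | rfl
  · rw [show ((3 * (2 : ℕ) - 5) * (k : ℤ) ^ 2 + (5 - (2 : ℕ)) * (k : ℤ)) = 2 * (a + k) by
      push_cast; linear_combination ha, Int.mul_ediv_cancel_left _ two_ne_zero]
    push_cast
    apply mul_left_cancel₀ (two_ne_zero' ℤ)
    linear_combination -hchoose - ha - hb
  · rw [show ((3 * (3 : ℕ) - 5) * (k : ℤ) ^ 2 + (5 - (3 : ℕ)) * (k : ℤ)) = 2 * (2 * k ^ 2 + k) by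
      push_cast; ring, Int.mul_ediv_cancel_left _ two_ne_zero]
    push_cast [Nat.cast_sub hn]
    apply mul_left_cancel₀ (two_ne_zero' ℤ)
    linear_combination -hchoose - hb

/-- Ore's theorem, case `d ∈ {2, 3}`: the maximum size of a simple `k`-connected graph of
order `n` and diameter `d` equals
`((3d-5)k² + (5-d)k)/2 + C(n-kd+k-2, 2) + ((d-1)k+4-d)(n-kd+k-2)`. -/
theorem max_size_kConnected_diam_two_three (k d n : ℕ) (hk : 1 ≤ k) (hd : d = 2 ∨ d = 3)
    (hn : k * (d - 1) + 2 ≤ n) :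
    (∀ (V : Type) [Fintype V] (G : SimpleGraph V),
        G.KConnected k → Fintype.card V = n → G.diam = d →
        (G.edgeSet.ncard : ℤ) ≤
          ((3 * (d : ℤ) - 5) * (k : ℤ) ^ 2 + (5 - (d : ℤ)) * (k : ℤ)) / 2
            + ((n : ℤ) - k * d + k - 2) * (((n : ℤ) - k * d + k - 2) - 1) / 2
            + (((d : ℤ) - 1) * k + 4 - (d : ℤ)) * ((n : ℤ) - k * d + k - 2)) ∧
    (∃ (V : Type) (_ : Fintype V) (G : SimpleGraph V),
        G.KConnected k ∧ Fintype.card V = n ∧ G.diam = d ∧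
        (G.edgeSet.ncard : ℤ) =
          ((3 * (d : ℤ) - 5) * (k : ℤ) ^ 2 + (5 - (d : ℤ)) * (k : ℤ)) / 2
            + ((n : ℤ) - k * d + k - 2) * (((n : ℤ) - k * d + k - 2) - 1) / 2
            + (((d : ℤ) - 1) * k + 4 - (d : ℤ)) * ((n : ℤ) - k * d + k - 2)) := by
  rw [ore_bound_eq_choose_two_sub hd (by rcases hd with rfl | rfl <;> omega)]
  refine ⟨fun V _ G _ hV hdiam => ?_, ?_⟩
  · have hsum := G.ncard_edgeSet_add_ncard_edgeSet_compl
    have hcompl := G.le_ncard_edgeSet_compl_of_diam hd hdiam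
    rw [hV] at hsum hcompl
    omega
  · obtain ⟨G, hG, hdiam, hle⟩ := exists_kConnected_diam_ncard_edgeSet_compl_le hk hd hn
    have hsum := G.ncard_edgeSet_add_ncard_edgeSet_compl
    have hcompl := G.le_ncard_edgeSet_compl_of_diam hd hdiam
    rw [Fintype.card_fin] at hsum hcompl
    exact ⟨Fin n, inferInstance, G, hG, Fintype.card_fin n, hdiam, by omega⟩
end

section
/- Let k ≥ 1 and d ≥ 4 be integers, and let G be a simple k-connected graph of order n and diameter d. Then the number of edges of G is at most ((3d-5)k² + (5-d)k)/2 + C(n-kd+k-2, 2) + 3k(n-kd+k-2). -/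
/-!
Fix `u`, `v` at distance `d` and let `aᵢ` be the number of vertices at distance `i` from `u`.
Every layer `0 < i < d` separates `u` from `v`, so `aᵢ ≥ k`, while `a₀, a_d ≥ 1`. Edges only
join vertices in equal or consecutive layers, so `2|E| ≤ ∑ aᵢ(aᵢ - 1) + 2 ∑ aᵢaᵢ₊₁`. Write
`a = c + b` with `c = (1, k, …, k, 1)` and `b ≥ 0` of total `m = n - (d - 1)k - 2`; since
`∑ bᵢ² + 2 ∑ bᵢbᵢ₊₁ ≤ m²` and every `cᵢ ≤ k`, the right-hand side exceeds its value at `c`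
by at most `m(m - 1) + 6km`.
-/

open Finset

/-- Twice the number of pairs of distinct vertices in equal or consecutive layers, for layers
of sizes `a 0, …, a d`. -/
def layeredPairs (a : ℕ → ℤ) (d : ℕ) : ℤ :=
  ∑ i ∈ range (d + 1), a i * (a i - 1) + 2 * ∑ i ∈ range d, a i * a (i + 1)

theorem sum_sq_add_two_mul_sum_mul_succ_le_sq_sum (b : ℕ → ℤ) (t : ℕ)
    (hb : ∀ i ≤ t, 0 ≤ b i) :
    ∑ i ∈ range (t + 1), b i ^ 2 + 2 * ∑ i ∈ range t, b i * b (i + 1)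
      ≤ (∑ i ∈ range (t + 1), b i) ^ 2 := by
  induction t with
  | zero => simp
  | succ t ih =>
    rw [sum_range_succ (fun i => b i ^ 2) (t + 1), sum_range_succ (fun i => b i * b (i + 1)) t,
      sum_range_succ b (t + 1)]
    have hbt : b t ≤ ∑ i ∈ range (t + 1), b i :=
      single_le_sum (fun i hi => hb i (by have := mem_range_succ_iff.1 hi; omega))
        (self_mem_range_succ t)
    nlinarith [ih fun i hi => hb i (by omega), hb (t + 1) le_rfl, hb t (by omega)]

theorem layeredPairs_add (b c : ℕ → ℤ) (d : ℕ) :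
    layeredPairs (b + c) d = layeredPairs c d
      + (∑ i ∈ range (d + 1), b i ^ 2 + 2 * ∑ i ∈ range d, b i * b (i + 1))
      - ∑ i ∈ range (d + 1), b i
      + 2 * (∑ i ∈ range (d + 1), c i * b i + ∑ i ∈ range d, b i * c (i + 1)
        + ∑ i ∈ range d, c i * b (i + 1)) := by
  have hdiag : ∑ i ∈ range (d + 1), (b + c) i * ((b + c) i - 1) = ∑ i ∈ range (d + 1),
      (c i * (c i - 1) + b i ^ 2 - b i + 2 * (c i * b i)) :=
    sum_congr rfl fun i _ => by simp only [Pi.add_apply]; ring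
  have hoff : ∑ i ∈ range d, (b + c) i * (b + c) (i + 1) = ∑ i ∈ range d,
      (c i * c (i + 1) + b i * b (i + 1) + b i * c (i + 1) + c i * b (i + 1)) :=
    sum_congr rfl fun i _ => by simp only [Pi.add_apply]; ring
  simp only [layeredPairs, hdiag, hoff, sum_add_distrib, sum_sub_distrib, ← mul_sum]
  ring

theorem layeredPairs_le (a c : ℕ → ℤ) {d : ℕ} {k m : ℤ} (hk : 0 ≤ k)
    (hca : ∀ i ≤ d, c i ≤ a i) (hck : ∀ i ≤ d, c i ≤ k)
    (hm : ∑ i ∈ range (d + 1), (a i - c i) = m) :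
    layeredPairs a d ≤ layeredPairs c d + m * (m - 1) + 6 * k * m := by
  obtain ⟨b, rfl⟩ : ∃ b, a = b + c := ⟨a - c, (sub_add_cancel a c).symm⟩
  simp only [Pi.add_apply, add_sub_cancel_right] at hm
  have hb : ∀ i ≤ d, 0 ≤ b i := fun i hi => by simpa using hca i hi
  have hkb : ∑ i ∈ range (d + 1), k * b i = k * m := by rw [← mul_sum, hm]
  have hsame : ∑ i ∈ range (d + 1), c i * b i ≤ k * m := hkb ▸ sum_le_sum fun i hi =>
    have hi := mem_range_succ_iff.1 hi
    mul_le_mul_of_nonneg_right (hck i hi) (hb i hi)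
  have hnext : ∑ i ∈ range d, b i * c (i + 1) ≤ k * m :=
    calc ∑ i ∈ range d, b i * c (i + 1) ≤ ∑ i ∈ range d, k * b i := sum_le_sum fun i hi => by
          have := mem_range.1 hi
          rw [mul_comm k]
          exact mul_le_mul_of_nonneg_left (hck _ (by omega)) (hb i (by omega))
      _ ≤ k * m := by
          rw [← hkb, sum_range_succ]
          linarith [mul_nonneg hk (hb d le_rfl)]
  have hprev : ∑ i ∈ range d, c i * b (i + 1) ≤ k * m :=
    calc ∑ i ∈ range d, c i * b (i + 1) ≤ ∑ i ∈ range d, k * b (i + 1) := sum_le_sum fun i hi =>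
          have := mem_range.1 hi
          mul_le_mul_of_nonneg_right (hck _ (by omega)) (hb _ (by omega))
      _ ≤ k * m := by
          rw [← hkb, sum_range_succ']
          linarith [mul_nonneg hk (hb 0 (Nat.zero_le d))]
  have hsq := sum_sq_add_two_mul_sum_mul_succ_le_sq_sum b d hb
  rw [hm] at hsq
  rw [layeredPairs_add, hm]
  linarith

theorem even_layeredPairs (a : ℕ → ℤ) (d : ℕ) : Even (layeredPairs a d) :=
  (even_sum _ fun i _ => Int.even_mul_pred_self (a i)).add (even_two_mul _)

def endpointProfile (k : ℤ) (d : ℕ) (i : ℕ) : ℤ := if i = 0 ∨ i = d then 1 else k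

theorem endpointProfile_zero (k : ℤ) (d : ℕ) : endpointProfile k d 0 = 1 :=
  if_pos (Or.inl rfl)

theorem endpointProfile_self (k : ℤ) (d : ℕ) : endpointProfile k d d = 1 :=
  if_pos (Or.inr rfl)

theorem endpointProfile_of_pos_of_lt (k : ℤ) {d i : ℕ} (h₀ : 0 < i) (hd : i < d) :
    endpointProfile k d i = k :=
  if_neg (by omega)

theorem endpointProfile_le {k : ℤ} (hk : 1 ≤ k) {d i : ℕ} : endpointProfile k d i ≤ k := by
  unfold endpointProfile
  split_ifs <;> omega

theorem sum_endpointProfile (k : ℤ) {d : ℕ} (hd : 1 ≤ d) :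
    ∑ i ∈ range (d + 1), endpointProfile k d i = (d - 1) * k + 2 := by
  obtain ⟨e, rfl⟩ := Nat.exists_eq_add_of_le' hd
  rw [sum_range_succ, sum_range_succ', sum_congr rfl fun i hi =>
    endpointProfile_of_pos_of_lt k i.succ_pos (by have := mem_range.1 hi; omega)]
  rw [endpointProfile_zero, endpointProfile_self, sum_const, card_range, nsmul_eq_mul]
  push_cast
  ring

theorem layeredPairs_endpointProfile (k : ℤ) {d : ℕ} (hd : 2 ≤ d) :
    layeredPairs (endpointProfile k d) d = (3 * d - 5) * k ^ 2 + (5 - d) * k := by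
  obtain ⟨e, rfl⟩ := Nat.exists_eq_add_of_le' hd
  set c := endpointProfile k (e + 2)
  have hmid : ∀ i < e + 1, c (i + 1) = k := fun i hi =>
    endpointProfile_of_pos_of_lt k i.succ_pos (by omega)
  have hc₀ : c 0 = 1 := endpointProfile_zero k _
  have hcd : c (e + 2) = 1 := endpointProfile_self k _
  have hdiag : ∑ i ∈ range (e + 3), c i * (c i - 1) = (e + 1) * (k * (k - 1)) := by
    rw [sum_range_succ, sum_range_succ',
      sum_congr rfl fun i hi => by rw [hmid i (mem_range.1 hi)]]
    simp [hc₀, hcd]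
  have hoff : ∑ i ∈ range (e + 2), c i * c (i + 1) = e * k ^ 2 + 2 * k := by
    rw [sum_range_succ, sum_range_succ', sum_congr rfl fun i hi => by
      have := mem_range.1 hi
      rw [hmid i (by omega), hmid (i + 1) (by omega)]]
    rw [hc₀, hmid 0 (by omega), hmid e (by omega), hcd, sum_const, card_range, nsmul_eq_mul]
    ring
  rw [layeredPairs, hdiag, hoff]
  push_cast
  ring

theorem Fintype.sum_comp_eq_sum_range_card_smul {α M : Type*} [Fintype α] [AddCommMonoid M]
    (ℓ : α → ℕ) {D : ℕ} (hD : ∀ x, ℓ x ≤ D) (g : ℕ → M) :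
    ∑ x, g (ℓ x) = ∑ i ∈ range (D + 1), #{x | ℓ x = i} • g i := by
  simp only [← sum_fiberwise_of_maps_to' (fun x _ => mem_range.2 (Nat.lt_succ_of_le (hD x))) g,
    sum_const]

namespace SimpleGraph

variable {V : Type*} {G : SimpleGraph V}

theorem Adj.dist_le_add_one {x y : V} (h : G.Adj x y) (u : V) : G.dist u y ≤ G.dist u x + 1 := by
  rcases h.diff_dist_adj (u := u) with h | h | h <;> omega

theorem Walk.exists_mem_support_eq_of_le {f : V → ℕ} (hf : ∀ x y, G.Adj x y → f y ≤ f x + 1)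
    {x y : V} (p : G.Walk x y) {i : ℕ} (hx : f x ≤ i) (hy : i ≤ f y) :
    ∃ z ∈ p.support, f z = i := by
  induction p with
  | nil => exact ⟨_, List.mem_singleton_self _, le_antisymm hx hy⟩
  | @cons x x' _ h p ih =>
    by_cases hxi : f x = i
    · exact ⟨x, List.mem_cons_self, hxi⟩
    · obtain ⟨z, hz, rfl⟩ := ih (by have := hf _ _ h; omega) hy
      exact ⟨z, List.mem_cons_of_mem _ hz, rfl⟩

theorem two_mul_card_edgeFinset_add_card_le [Fintype V] [DecidableRel G.Adj] (ℓ : V → ℕ)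
    (hadj : ∀ x y, G.Adj x y → ℓ y ≤ ℓ x + 1) :
    2 * #G.edgeFinset + Fintype.card V
      ≤ ∑ x, #{y | ℓ y = ℓ x} + 2 * ∑ x, #{y | ℓ y = ℓ x + 1} := by
  classical
  let same : V → ℕ := fun x => #{y | G.Adj x y ∧ ℓ y = ℓ x}
  let up : V → ℕ := fun x => #{y | G.Adj x y ∧ ℓ y = ℓ x + 1}
  let down : V → ℕ := fun x => #{y | G.Adj y x ∧ ℓ x = ℓ y + 1}
  have hdeg : ∀ x, G.degree x ≤ same x + up x + down x := by
    intro x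
    rw [← card_neighborFinset_eq_degree, neighborFinset_eq_filter]
    refine (card_le_card fun y hy => ?_).trans ((card_union_le _ _).trans
      (Nat.add_le_add_right (card_union_le _ _) _))
    simp only [mem_filter, mem_univ, true_and, mem_union] at hy ⊢
    have := hadj _ _ hy
    have := hadj _ _ hy.symm
    simp only [hy, hy.symm, true_and]
    omega
  have hsame : ∀ x, same x + 1 ≤ #{y | ℓ y = ℓ x} := fun x => by
    rw [← card_insert_of_notMem (s := {y | G.Adj x y ∧ ℓ y = ℓ x}) (a := x) (by simp)]
    refine card_le_card fun y hy => ?_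
    simp only [mem_insert, mem_filter, mem_univ, true_and] at hy ⊢
    rcases hy with rfl | hy
    exacts [rfl, hy.2]
  have hup : ∀ x, up x ≤ #{y | ℓ y = ℓ x + 1} := fun x =>
    card_le_card fun y hy => by simp only [mem_filter, mem_univ, true_and] at hy ⊢; exact hy.2
  have hdown : ∑ x, down x = ∑ x, up x :=
    (sum_card_bipartiteAbove_eq_sum_card_bipartiteBelow fun x y => G.Adj x y ∧ ℓ y = ℓ x + 1).symm
  calc 2 * #G.edgeFinset + Fintype.card V = ∑ x, (G.degree x + 1) := by
        rw [sum_add_distrib, sum_degrees_eq_twice_card_edges, sum_const, card_univ, smul_eq_mul,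
          mul_one]
    _ ≤ ∑ x, (same x + 1 + up x + down x) := sum_le_sum fun x _ => by have := hdeg x; omega
    _ = ∑ x, (same x + 1) + 2 * ∑ x, up x := by
        rw [sum_add_distrib, sum_add_distrib, hdown]; ring
    _ ≤ _ := by gcongr with x _ x _; exacts [hsame x, hup x]

theorem two_mul_card_edgeFinset_le_layeredPairs [Fintype V] [DecidableRel G.Adj] (ℓ : V → ℕ)
    {D : ℕ} (hadj : ∀ x y, G.Adj x y → ℓ y ≤ ℓ x + 1) (hD : ∀ x, ℓ x ≤ D) :
    2 * (#G.edgeFinset : ℤ) ≤ layeredPairs (fun i => #{x | ℓ x = i}) D := by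
  set a : ℕ → ℕ := fun i => #{x | ℓ x = i}
  have hbound := G.two_mul_card_edgeFinset_add_card_le ℓ hadj
  have hlast : a (D + 1) = 0 := by
    simp only [a, card_eq_zero, filter_eq_empty_iff]
    exact fun x _ => by have := hD x; omega
  have hcard : Fintype.card V = ∑ i ∈ range (D + 1), a i := by
    simpa using Fintype.sum_comp_eq_sum_range_card_smul ℓ hD fun _ => (1 : ℕ)
  have hdiag : ∑ x, a (ℓ x) = ∑ i ∈ range (D + 1), a i * a i :=
    Fintype.sum_comp_eq_sum_range_card_smul ℓ hD a
  have hoff : ∑ x, a (ℓ x + 1) = ∑ i ∈ range D, a i * a (i + 1) := by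
    rw [Fintype.sum_comp_eq_sum_range_card_smul ℓ hD (fun i => a (i + 1)), sum_range_succ, hlast]
    simp only [a, smul_eq_mul, mul_zero, add_zero]
  rw [hcard, hdiag, hoff] at hbound
  zify at hbound
  simp only [layeredPairs, mul_sub, mul_one, sum_sub_distrib]
  linarith

theorem KConnected.le_ncard_of_forall_walk_meets [Fintype V] {k : ℕ} (hG : G.KConnected k)
    {S : Set V} {u v : V} (hu : u ∉ S) (hv : v ∉ S)
    (hS : ∀ p : G.Walk u v, ∃ z ∈ p.support, z ∈ S) : k ≤ S.ncard := by
  by_contra! hlt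
  obtain ⟨p⟩ := (hG.2 S hlt).preconnected ⟨u, hu⟩ ⟨v, hv⟩
  obtain ⟨z, hz, hzS⟩ := hS (p.map (Embedding.induce Sᶜ).toHom)
  replace hz : z ∈ (p.map (Embedding.induce Sᶜ).toHom).support := hz
  obtain ⟨z, -, rfl⟩ := List.mem_map.1 (Walk.support_map _ p ▸ hz)
  exact z.2 hzS

theorem KConnected.le_card_dist_eq [Fintype V] {k : ℕ} (hG : G.KConnected k) {u v : V} {i : ℕ}
    (hi₀ : 0 < i) (hiv : i < G.dist u v) : k ≤ #{x | G.dist u x = i} := by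
  rw [← Set.ncard_coe_finset, coe_filter_univ]
  refine hG.le_ncard_of_forall_walk_meets (u := u) (v := v)
    (by rw [Set.mem_ofPred_eq, dist_self]; omega) (by rw [Set.mem_ofPred_eq]; omega)
    fun p => p.exists_mem_support_eq_of_le (fun x y h => h.dist_le_add_one u) ?_ hiv.le
  simp

theorem KConnected.endpointProfile_le_card_dist_eq [Fintype V] {k d : ℕ} (hG : G.KConnected k)
    {u v : V} (huv : G.dist u v = d) {i : ℕ} (hi : i ≤ d) :
    endpointProfile k d i ≤ #{x | G.dist u x = i} := by
  unfold endpointProfile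
  split_ifs with hend
  · obtain ⟨x, hx⟩ : ∃ x, G.dist u x = i := by
      rcases hend with rfl | rfl
      exacts [⟨u, G.dist_self⟩, ⟨v, huv⟩]
    exact_mod_cast card_pos.2 ⟨x, by simpa using hx⟩
  · exact_mod_cast hG.le_card_dist_eq (by omega) (by omega : i < G.dist u v)

end SimpleGraph

/-- Upper bound in Ore's theorem, case `d ≥ 4`: a simple `k`-connected graph of order `n`
and diameter `d` has at most
`((3d-5)k² + (5-d)k)/2 + C(n-kd+k-2, 2) + 3k(n-kd+k-2)` edges. -/
theorem size_le_of_kConnected_diam_ge_four (k d n : ℕ) {V : Type} [Fintype V]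
    (G : SimpleGraph V) (hk : 1 ≤ k) (hd : 4 ≤ d)
    (hG : G.KConnected k) (hcard : Fintype.card V = n) (hdiam : G.diam = d) :
    (G.edgeSet.ncard : ℤ) ≤
      ((3 * (d : ℤ) - 5) * (k : ℤ) ^ 2 + (5 - (d : ℤ)) * (k : ℤ)) / 2
        + ((n : ℤ) - k * d + k - 2) * (((n : ℤ) - k * d + k - 2) - 1) / 2
        + 3 * (k : ℤ) * ((n : ℤ) - k * d + k - 2) := by
  classical
  have : Nonempty V := Fintype.card_pos_iff.mp (by have := hG.1; omega)
  obtain ⟨u, v, huv⟩ := G.exists_dist_eq_diam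
  rw [hdiam] at huv
  have hdist : ∀ x, G.dist u x ≤ d := fun x =>
    hdiam ▸ G.dist_le_diam (G.ediam_ne_top_of_diam_ne_zero (by omega))
  set a : ℕ → ℤ := fun i => #{x | G.dist u x = i}
  set m : ℤ := n - k * d + k - 2
  have hm : ∑ i ∈ range (d + 1), (a i - endpointProfile k d i) = m := by
    have hn : (n : ℤ) = ∑ i ∈ range (d + 1), a i := by
      simpa [hcard] using Fintype.sum_comp_eq_sum_range_card_smul _ hdist fun _ => (1 : ℤ)
    rw [sum_sub_distrib, ← hn, sum_endpointProfile k (by omega)]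
    ring
  have hedges := (G.two_mul_card_edgeFinset_le_layeredPairs (G.dist u)
    (fun x y h => h.dist_le_add_one u) hdist).trans
    (layeredPairs_le a _ (by positivity) (fun i hi => hG.endpointProfile_le_card_dist_eq huv hi)
      (fun i _ => endpointProfile_le (by exact_mod_cast hk)) hm)
  have hc := even_layeredPairs (endpointProfile k d) d
  rw [layeredPairs_endpointProfile k (by omega)] at hedges hc
  have hm2 := Int.even_mul_pred_self m
  rw [even_iff_two_dvd] at hc hm2
  rw [← G.coe_edgeFinset, Set.ncard_coe_finset]
  have : 6 * (k : ℤ) * m = 2 * (3 * k * m) := by ring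
  omega
end

section
/- Let k ≥ 1 and d ≥ 2, and let G be a simple k-connected graph of order n and diameter d having the maximum number of edges among all simple k-connected graphs of order n and diameter d. Let x and y be vertices of G with d_G(x, y) = d. Then for every integer i with 0 ≤ i ≤ d-1, the set N_i(x) ∪ N_{i+1}(x) induces a clique in G. -/
namespace SimpleGraph

variable {V : Type*} {G H : SimpleGraph V}

theorem KConnected.mono [Fintype V] {k : ℕ} (hGH : G ≤ H) (hG : G.KConnected k) :
    H.KConnected k :=
  ⟨hG.1, fun S hS => (hG.2 S hS).mono fun _ _ h => hGH h⟩

theorem ncard_edgeSet_sup_edge [Finite V] {u v : V} (hn : ¬G.Adj u v) (h : u ≠ v) :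
    (G ⊔ edge u v).edgeSet.ncard = G.edgeSet.ncard + 1 := by
  rw [edgeSet_sup, edgeSet_edge_of_ne h, Set.union_singleton,
    Set.ncard_insert_of_notMem (by simpa using hn)]

theorem dist_le_dist_add_length_of_forall_adj {x : V}
    (hH : ∀ a b, H.Adj a b → G.dist x b ≤ G.dist x a + 1) :
    ∀ {a b : V} (p : H.Walk a b), G.dist x b ≤ G.dist x a + p.length
  | _, _, .nil => by simp
  | a, _, .cons h p => by
    have := hH a _ h
    have := dist_le_dist_add_length_of_forall_adj hH p
    rw [Walk.length_cons]
    omega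

theorem dist_le_dist_sup_edge {x u v w : V} (hvu : G.dist x v ≤ G.dist x u + 1)
    (huv : G.dist x u ≤ G.dist x v + 1) (hr : (G ⊔ edge u v).Reachable x w) :
    G.dist x w ≤ (G ⊔ edge u v).dist x w := by
  have step : ∀ a b, (G ⊔ edge u v).Adj a b → G.dist x b ≤ G.dist x a + 1 := by
    intro a b hab
    rw [sup_adj, edge_adj] at hab
    rcases hab with hab | ⟨⟨rfl, rfl⟩ | ⟨rfl, rfl⟩, -⟩
    · simpa [dist_eq_one_iff_adj.mpr hab] using hab.reachable.dist_triangle_right x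
    · exact hvu
    · exact huv
  obtain ⟨p, hp⟩ := hr.exists_walk_length_eq_dist
  simpa [hp] using dist_le_dist_add_length_of_forall_adj step p

theorem diam_eq_of_le_of_diam_le_dist {x y : V} (hGH : G ≤ H) (hG : G.ediam ≠ ⊤)
    (h : G.diam ≤ H.dist x y) : H.diam = G.diam :=
  le_antisymm (diam_anti_of_ediam_ne_top hGH hG)
    (h.trans (dist_le_diam (ne_top_of_le_ne_top hG (ediam_anti hGH))))

end SimpleGraph

open SimpleGraph in
theorem levels_clique_of_maximal_general (k d n : ℕ) {V : Type} [Fintype V] (G : SimpleGraph V)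
    (hd : 2 ≤ d)
    (hG : G.KConnected k) (hcard : Fintype.card V = n) (hdiam : G.diam = d)
    (hmax : ∀ (W : Type) [Fintype W] (H : SimpleGraph W),
      H.KConnected k → Fintype.card W = n → H.diam = d →
      H.edgeSet.ncard ≤ G.edgeSet.ncard)
    (x y : V) (hxy : G.dist x y = d) :
    ∀ i : ℕ, i ≤ d - 1 → ∀ u v : V, u ≠ v →
      (G.dist x u = i ∨ G.dist x u = i + 1) →
      (G.dist x v = i ∨ G.dist x v = i + 1) → G.Adj u v := by
  intro i _ u v huv hu hv
  by_contra hadj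
  have hGH : G ≤ G ⊔ edge u v := le_sup_left
  have hG_ediam : G.ediam ≠ ⊤ := ediam_ne_top_of_diam_ne_zero (by omega)
  have hreach : (G ⊔ edge u v).Reachable x y :=
    preconnected_of_ediam_ne_top (ne_top_of_le_ne_top hG_ediam (ediam_anti hGH)) x y
  have hdist : G.diam ≤ (G ⊔ edge u v).dist x y :=
    hdiam ▸ hxy ▸ dist_le_dist_sup_edge (by omega) (by omega) hreach
  have hH_diam : (G ⊔ edge u v).diam = d :=
    hdiam ▸ diam_eq_of_le_of_diam_le_dist hGH hG_ediam hdist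
  have hle := hmax V _ (hG.mono hGH) hcard hH_diam
  rw [ncard_edgeSet_sup_edge hadj huv] at hle
  omega

/-- Let `G` be a simple `k`-connected graph of order `n` and diameter `d ≥ 2` having the
maximum number of edges among all simple `k`-connected graphs of order `n` and diameter
`d`, and let `x, y` be vertices with `d_G(x, y) = d`.  Then for every `0 ≤ i ≤ d-1` the
set `N_i(x) ∪ N_{i+1}(x)` of vertices at distance `i` or `i+1` from `x` induces a clique. -/
theorem levels_clique_of_maximal (k d n : ℕ) {V : Type} [Fintype V] (G : SimpleGraph V)
    (hk : 1 ≤ k) (hd : 2 ≤ d)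
    (hG : G.KConnected k) (hcard : Fintype.card V = n) (hdiam : G.diam = d)
    (hmax : ∀ (W : Type) [Fintype W] (H : SimpleGraph W),
      H.KConnected k → Fintype.card W = n → H.diam = d →
      H.edgeSet.ncard ≤ G.edgeSet.ncard)
    (x y : V) (hxy : G.dist x y = d) :
    ∀ i : ℕ, i ≤ d - 1 → ∀ u v : V, u ≠ v →
      (G.dist x u = i ∨ G.dist x u = i + 1) →
      (G.dist x v = i ∨ G.dist x v = i + 1) → G.Adj u v :=
  levels_clique_of_maximal_general k d n G hd hG hcard hdiam hmax x y hxy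
end

section
/- Let d ≥ 4 and n ≥ d+1 be integers. Then the maximum number of edges of a simple connected graph of order n and diameter d equals d + C(n-d-1, 2) + 3(n-d-1), where C(m,2) = m(m-1)/2 denotes the binomial coefficient. -/
/-!
Let `P` be a shortest path between two vertices at distance `d = diam G`. Since `P` is a geodesic,
the only edges among its `d + 1` vertices are its own `d` edges, and the neighbours on `P` of any
other vertex are pairwise at distance at most `2`, hence lie among three consecutive vertices of
`P`. Adding the at most `C(n - d - 1, 2)` edges among the remaining vertices gives the bound. It is
attained by a path `v₀ … v_d` together with a clique on `n - d - 1` further vertices, each joined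
to `v₁`, `v₂` and `v₃`.
-/

open Finset

theorem Finset.card_le_add_one_of_forall_le_add {s : Finset ℕ} {k : ℕ}
    (h : ∀ i ∈ s, ∀ j ∈ s, j ≤ i + k) : #s ≤ k + 1 := by
  rcases s.eq_empty_or_nonempty with rfl | hs
  · simp
  calc #s ≤ #(Icc (s.min' hs) (s.min' hs + k)) :=
        card_le_card fun j hj => mem_Icc.mpr ⟨s.min'_le j hj, h _ (s.min'_mem hs) j hj⟩
    _ = k + 1 := by simp only [Nat.card_Icc]; omega

namespace SimpleGraph

variable {V : Type*} {G : SimpleGraph V}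

theorem dist_le_sub_of_adj_succ {f : ℕ → V} {k : ℕ} (hf : ∀ i < k, G.Adj (f i) (f (i + 1)))
    {i j : ℕ} (hij : i ≤ j) (hjk : j ≤ k) : G.dist (f i) (f j) ≤ j - i := by
  induction j, hij using Nat.le_induction with
  | base => simp
  | succ j hij ih =>
    have hstep := (hf j (by omega)).reachable.dist_triangle_right (f i)
    rw [dist_eq_one_iff_adj.mpr (hf j (by omega))] at hstep
    have := ih (by omega)
    omega

theorem le_add_dist_of_forall_adj {f : V → ℕ} (hf : ∀ x y, G.Adj x y → f y ≤ f x + 1)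
    {u v : V} (h : G.Reachable u v) : f v ≤ f u + G.dist u v := by
  obtain ⟨p, hp⟩ := h.exists_walk_length_eq_dist
  rw [← hp]
  clear hp h
  induction p with
  | nil => simp
  | cons hadj q ih =>
    have := hf _ _ hadj
    rw [Walk.length_cons]
    omega

theorem diam_eq_of_forall_dist_le {k : ℕ} (hconn : G.Connected) (hle : ∀ x y, G.dist x y ≤ k)
    {a b : V} (hab : G.dist a b = k) : G.diam = k := by
  have hediam : G.ediam = k := by
    refine le_antisymm (ediam_le_of_edist_le fun x y => ?_) ?_
    · rw [← (hconn x y).coe_dist_eq_edist]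
      exact_mod_cast hle x y
    · rw [← hab, (hconn a b).coe_dist_eq_edist]
      exact edist_le_ediam
  rw [diam, hediam, ENat.toNat_natCast]

section edgeFinsetWithin

variable [DecidableEq V]

def edgeFinsetWithin (G : SimpleGraph V) [Fintype G.edgeSet] (s : Finset V) : Finset (Sym2 V) :=
  {e ∈ G.edgeFinset | e ∈ s.sym2}

@[simp]
theorem mk_mem_edgeFinsetWithin [Fintype G.edgeSet] {s : Finset V} {x y : V} :
    s(x, y) ∈ G.edgeFinsetWithin s ↔ G.Adj x y ∧ x ∈ s ∧ y ∈ s := by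
  simp [edgeFinsetWithin]

theorem edgeFinsetWithin_subset_image_offDiag [Fintype G.edgeSet] (s : Finset V) :
    G.edgeFinsetWithin s ⊆ s.offDiag.image Sym2.mk.uncurry := by
  intro e he
  induction e using Sym2.ind with
  | _ x y =>
    rw [mk_mem_edgeFinsetWithin] at he
    exact mem_image.mpr ⟨(x, y), mem_offDiag.mpr ⟨he.2.1, he.2.2, he.1.ne⟩, rfl⟩

theorem card_edgeFinsetWithin_le [Fintype G.edgeSet] (s : Finset V) :
    #(G.edgeFinsetWithin s) ≤ (#s).choose 2 :=
  (card_le_card (edgeFinsetWithin_subset_image_offDiag s)).trans_eq (Sym2.card_image_offDiag s)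

theorem IsClique.card_edgeFinsetWithin [Fintype G.edgeSet] {s : Finset V}
    (h : G.IsClique (s : Set V)) : #(G.edgeFinsetWithin s) = (#s).choose 2 := by
  rw [← Sym2.card_image_offDiag s]
  congr 1
  refine subset_antisymm (edgeFinsetWithin_subset_image_offDiag s) fun e he => ?_
  obtain ⟨⟨x, y⟩, hxy, rfl⟩ := mem_image.mp he
  rw [mem_offDiag] at hxy
  exact mk_mem_edgeFinsetWithin.mpr ⟨h hxy.1 hxy.2.1 hxy.2.2, hxy.1, hxy.2.1⟩

theorem card_edgeFinset_eq_add_sum [Fintype V] [DecidableRel G.Adj] [Fintype G.edgeSet]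
    (s : Finset V) :
    #G.edgeFinset = #(G.edgeFinsetWithin s) + #(G.edgeFinsetWithin sᶜ)
      + ∑ t ∈ sᶜ, #{x ∈ s | G.Adj t x} := by
  have hwithin := card_filter_add_card_filter_not (s := G.edgeFinset) (· ∈ s.sym2)
  have hrest := card_filter_add_card_filter_not
    (s := {e ∈ G.edgeFinset | e ∉ s.sym2}) (· ∈ sᶜ.sym2)
  have hwithin_compl :
      {e ∈ {e ∈ G.edgeFinset | e ∉ s.sym2} | e ∈ sᶜ.sym2} = G.edgeFinsetWithin sᶜ := by
    ext e
    induction e using Sym2.ind with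
    | _ x y =>
      simp only [edgeFinsetWithin, mem_filter, mk_mem_sym2_iff, mem_compl]
      tauto
  have hcross : #{e ∈ {e ∈ G.edgeFinset | e ∉ s.sym2} | e ∉ sᶜ.sym2}
      = ∑ t ∈ sᶜ, #{x ∈ s | G.Adj t x} := by
    rw [← card_sigma]
    refine (card_bij (fun a _ => s(a.1, a.2)) ?_ ?_ ?_).symm
    · rintro ⟨t, x⟩ h
      simp only [mem_sigma, mem_compl, mem_filter] at h
      simp [h.1, h.2.1, h.2.2]
    · rintro ⟨t, x⟩ h ⟨t', x'⟩ h' heq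
      simp only [mem_sigma, mem_compl, mem_filter] at h h'
      rcases Sym2.eq_iff.mp heq with ⟨rfl, rfl⟩ | ⟨rfl, rfl⟩
      · rfl
      · exact absurd h.2.1 h'.1
    · intro e he
      induction e using Sym2.ind with
      | _ x y =>
        simp only [mem_filter, mem_edgeFinset, mem_edgeSet, mk_mem_sym2_iff, mem_compl] at he
        by_cases hx : x ∈ s
        · exact ⟨⟨y, x⟩, by simp [hx, he.1.1.symm, show y ∉ s by tauto], Sym2.eq_swap⟩
        · exact ⟨⟨x, y⟩, by simp [hx, he.1.1, show y ∈ s by tauto], rfl⟩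
  rw [hwithin_compl, hcross] at hrest
  change #(G.edgeFinsetWithin s) + _ = _ at hwithin
  omega

end edgeFinsetWithin

namespace Walk

variable {u v : V} (p : G.Walk u v)

theorem dist_getVert_le {i j : ℕ} (hij : i ≤ j) (hj : j ≤ p.length) :
    G.dist (p.getVert i) (p.getVert j) ≤ j - i :=
  dist_le_sub_of_adj_succ (f := p.getVert) (fun _ hi => p.adj_getVert_succ hi) hij hj

variable {p}

theorem dist_getVert_of_length_eq_dist (hp : p.length = G.dist u v) {i j : ℕ} (hij : i ≤ j)
    (hj : j ≤ p.length) : G.dist (p.getVert i) (p.getVert j) = j - i := by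
  refine le_antisymm (p.dist_getVert_le hij hj) ?_
  have h₁ := (p.drop i).reachable.dist_triangle_right u
  have h₂ := (p.drop j).reachable.dist_triangle_right (p.getVert i)
  have h₃ := p.dist_getVert_le (Nat.zero_le i) (hij.trans hj)
  have h₄ := p.dist_getVert_le hj le_rfl
  rw [getVert_zero] at h₃
  rw [getVert_length] at h₄
  omega

theorem mk_mem_edges_of_length_eq_dist (hp : p.length = G.dist u v) {x y : V}
    (hx : x ∈ p.support) (hy : y ∈ p.support) (hxy : G.Adj x y) : s(x, y) ∈ p.edges := by
  obtain ⟨i, rfl, hi⟩ := mem_support_iff_exists_getVert.mp hx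
  obtain ⟨j, rfl, hj⟩ := mem_support_iff_exists_getVert.mp hy
  rw [mk_mem_edges_iff_exists]
  rcases le_total i j with hij | hji
  · have := dist_getVert_of_length_eq_dist hp hij hj
    rw [dist_eq_one_iff_adj.mpr hxy] at this
    exact ⟨i, by omega, by rw [show j = i + 1 by omega]⟩
  · have := dist_getVert_of_length_eq_dist hp hji hi
    rw [dist_comm, dist_eq_one_iff_adj.mpr hxy] at this
    exact ⟨j, by omega, by rw [show i = j + 1 by omega, Sym2.eq_swap]⟩

theorem card_edgeFinsetWithin_support_le [DecidableEq V] [Fintype G.edgeSet]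
    (hp : p.length = G.dist u v) : #(G.edgeFinsetWithin p.support.toFinset) ≤ p.length := by
  have hsub : G.edgeFinsetWithin p.support.toFinset ⊆ p.edges.toFinset := by
    intro e he
    induction e using Sym2.ind with
    | _ x y =>
      simp only [mk_mem_edgeFinsetWithin, List.mem_toFinset] at he
      exact List.mem_toFinset.mpr (mk_mem_edges_of_length_eq_dist hp he.2.1 he.2.2 he.1)
  calc #(G.edgeFinsetWithin p.support.toFinset) ≤ #p.edges.toFinset := card_le_card hsub
    _ ≤ p.edges.length := List.toFinset_card_le _
    _ = p.length := length_edges p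

theorem card_filter_adj_support_le_three [DecidableEq V] [DecidableRel G.Adj]
    (hp : p.length = G.dist u v) (t : V) : #{x ∈ p.support.toFinset | G.Adj t x} ≤ 3 := by
  set I : Finset ℕ := {i ∈ range (p.length + 1) | G.Adj t (p.getVert i)}
  have hI : #I ≤ 3 := by
    refine card_le_add_one_of_forall_le_add fun i hi j hj => ?_
    simp only [I, mem_filter, mem_range] at hi hj
    rcases le_total j i with hji | hij
    · omega
    have htri := hj.2.reachable.dist_triangle_right (p.getVert i)
    rw [dist_getVert_of_length_eq_dist hp hij (by omega), dist_comm,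
      dist_eq_one_iff_adj.mpr hi.2, dist_eq_one_iff_adj.mpr hj.2] at htri
    omega
  have hsub : {x ∈ p.support.toFinset | G.Adj t x} ⊆ I.image p.getVert := by
    intro x hx
    rw [mem_filter, List.mem_toFinset] at hx
    obtain ⟨i, rfl, hi⟩ := mem_support_iff_exists_getVert.mp hx.1
    exact mem_image.mpr ⟨i, mem_filter.mpr ⟨mem_range.mpr (by omega), hx.2⟩, rfl⟩
  exact (card_le_card hsub).trans (card_image_le.trans hI)

theorem card_edgeFinset_le_of_length_eq_dist [Fintype V] [DecidableEq V] [DecidableRel G.Adj]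
    [Fintype G.edgeSet] (hp : p.length = G.dist u v) :
    #G.edgeFinset ≤ p.length + (Fintype.card V - p.length - 1).choose 2
      + 3 * (Fintype.card V - p.length - 1) := by
  set S := p.support.toFinset
  have hS : #S = p.length + 1 := by
    rw [List.toFinset_card_of_nodup (p.isPath_of_length_eq_dist hp).support_nodup, length_support]
  have hSc : #Sᶜ = Fintype.card V - p.length - 1 := by
    rw [card_compl, hS]
    omega
  have hcross : ∑ t ∈ Sᶜ, #{x ∈ S | G.Adj t x} ≤ 3 * #Sᶜ :=
    calc ∑ t ∈ Sᶜ, #{x ∈ S | G.Adj t x} ≤ ∑ _t ∈ Sᶜ, 3 :=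
          sum_le_sum fun t _ => card_filter_adj_support_le_three hp t
      _ = 3 * #Sᶜ := by rw [sum_const, smul_eq_mul, mul_comm]
  rw [card_edgeFinset_eq_add_sum S, ← hSc]
  exact add_le_add
    (add_le_add (card_edgeFinsetWithin_support_le hp) (card_edgeFinsetWithin_le Sᶜ)) hcross

end Walk

theorem Connected.card_edgeFinset_le [Fintype V] [DecidableEq V] [DecidableRel G.Adj]
    [Fintype G.edgeSet] (hc : G.Connected) :
    #G.edgeFinset ≤ G.diam + (Fintype.card V - G.diam - 1).choose 2
      + 3 * (Fintype.card V - G.diam - 1) := by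
  have := hc.nonempty
  obtain ⟨u, v, huv⟩ := G.exists_dist_eq_diam
  obtain ⟨p, hp⟩ := hc.exists_walk_length_eq_dist u v
  rw [← huv, ← hp]
  exact p.card_edgeFinset_le_of_length_eq_dist hp

def pathCliqueGraph (d m : ℕ) : SimpleGraph (Fin (d + 1) ⊕ Fin m) where
  Adj
    | .inl i, .inl j => (pathGraph (d + 1)).Adj i j
    | .inr s, .inr t => s ≠ t
    | .inl i, .inr _ | .inr _, .inl i => 1 ≤ i.val ∧ i.val ≤ 3
  symm := ⟨by
    rintro (i | s) (j | t) h
    exacts [h.symm, h, h, Ne.symm h]⟩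
  loopless := ⟨by
    rintro (i | s) h
    exacts [(pathGraph _).loopless.irrefl i h, h rfl]⟩

namespace pathCliqueGraph

variable {d m : ℕ}

@[simp] theorem adj_inl_inl {i j : Fin (d + 1)} :
    (pathCliqueGraph d m).Adj (.inl i) (.inl j) ↔ (pathGraph (d + 1)).Adj i j := Iff.rfl

@[simp] theorem adj_inr_inr {s t : Fin m} :
    (pathCliqueGraph d m).Adj (.inr s) (.inr t) ↔ s ≠ t := Iff.rfl

@[simp] theorem adj_inl_inr {i : Fin (d + 1)} {t : Fin m} :
    (pathCliqueGraph d m).Adj (.inl i) (.inr t) ↔ 1 ≤ i.val ∧ i.val ≤ 3 := Iff.rfl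

@[simp] theorem adj_inr_inl {i : Fin (d + 1)} {t : Fin m} :
    (pathCliqueGraph d m).Adj (.inr t) (.inl i) ↔ 1 ≤ i.val ∧ i.val ≤ 3 := Iff.rfl

def inlHom : pathGraph (d + 1) →g pathCliqueGraph d m := ⟨Sum.inl, id⟩

theorem connected (hd : 1 ≤ d) : (pathCliqueGraph d m).Connected := by
  rw [connected_iff_exists_forall_reachable]
  refine ⟨.inl ⟨1, by omega⟩, ?_⟩
  rintro (i | t)
  · exact ((pathGraph_connected d).preconnected _ i).map inlHom
  · exact Adj.reachable (by simp)

theorem dist_inl_inl_le (i j : Fin (d + 1)) :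
    (pathCliqueGraph d m).dist (.inl i) (.inl j) ≤ Nat.dist i j := by
  let f : ℕ → Fin (d + 1) ⊕ Fin m := fun k => .inl (Fin.ofNat (d + 1) k)
  have hadj : ∀ k < d, (pathCliqueGraph d m).Adj (f k) (f (k + 1)) := by
    intro k hk
    simp [f, pathGraph_adj, Nat.mod_eq_of_lt, hk, Nat.lt_succ_of_lt hk]
  rcases le_total i j with hij | hji
  · have := dist_le_sub_of_adj_succ hadj (Fin.le_iff_val_le_val.mp hij) (Nat.lt_succ_iff.mp j.2)
    simp only [f, Fin.ofNat_val_eq_self] at this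
    dsimp only [Nat.dist]
    omega
  · have := dist_le_sub_of_adj_succ hadj (Fin.le_iff_val_le_val.mp hji) (Nat.lt_succ_iff.mp i.2)
    simp only [f, Fin.ofNat_val_eq_self] at this
    rw [dist_comm]
    dsimp only [Nat.dist]
    omega

theorem dist_le (hd : 3 ≤ d) (x y : Fin (d + 1) ⊕ Fin m) :
    (pathCliqueGraph d m).dist x y ≤ d := by
  have hinl_inr : ∀ i t, (pathCliqueGraph d m).dist (.inl i) (.inr t) ≤ d := by
    intro i t
    have h2t : (pathCliqueGraph d m).Adj (.inl ⟨2, by omega⟩) (.inr t) := by simp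
    have htri := h2t.reachable.dist_triangle_right (.inl i)
    have := dist_inl_inl_le (m := m) i ⟨2, by omega⟩
    rw [dist_eq_one_iff_adj.mpr h2t] at htri
    dsimp only [Nat.dist] at this
    have := i.2
    omega
  rcases x with i | s <;> rcases y with j | t
  · have := dist_inl_inl_le (m := m) i j
    dsimp only [Nat.dist] at this
    have := i.2
    have := j.2
    omega
  · exact hinl_inr i t
  · rw [dist_comm]
    exact hinl_inr j s
  · rcases eq_or_ne s t with rfl | hst
    · simp
    · rw [dist_eq_one_iff_adj.mpr (by simpa using hst)]
      omega

theorem dist_inl_zero_inl_last : (pathCliqueGraph d m).dist (.inl 0) (.inl (Fin.last d)) = d := by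
  refine le_antisymm (by simpa [Nat.dist] using dist_inl_inl_le (m := m) 0 (Fin.last d)) ?_
  -- The clique sits at height `2`, between the heights of its neighbours `v₁`, `v₂`, `v₃`.
  have hlip : ∀ x y, (pathCliqueGraph d m).Adj x y →
      Sum.elim Fin.val (fun _ => 2) y ≤ Sum.elim Fin.val (fun _ => 2) x + 1 := by
    rintro (i | s) (j | t) h <;> simp [pathGraph_adj] at h ⊢ <;> omega
  have hreach : (pathCliqueGraph d m).Reachable (.inl 0) (.inl (Fin.last d)) :=
    ((pathGraph_connected d).preconnected 0 (Fin.last d)).map inlHom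
  simpa using le_add_dist_of_forall_adj hlip hreach

theorem diam_eq (hd : 3 ≤ d) : (pathCliqueGraph d m).diam = d :=
  diam_eq_of_forall_dist_le (connected (by omega)) (dist_le hd) dist_inl_zero_inl_last

theorem add_choose_two_add_le_card_edgeFinset (hd : 3 ≤ d)
    [Fintype (pathCliqueGraph d m).edgeSet] :
    d + m.choose 2 + 3 * m ≤ #(pathCliqueGraph d m).edgeFinset := by
  classical
  set S : Finset (Fin (d + 1) ⊕ Fin m) := univ.map .inl
  have hSc : Sᶜ = univ.map .inr := by
    ext (x | x) <;> simp [S]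
  have hpath : d ≤ #((pathCliqueGraph d m).edgeFinsetWithin S) := by
    set pathEdge : Fin d → Sym2 (Fin (d + 1) ⊕ Fin m) :=
      fun i => s(.inl i.castSucc, .inl i.succ)
    have hinj : pathEdge.Injective := by
      intro i j h
      rcases Sym2.eq_iff.mp h with ⟨h₁, -⟩ | ⟨h₁, h₂⟩
      · exact Fin.castSucc_injective _ (Sum.inl_injective h₁)
      · have h₁ := congrArg Fin.val (Sum.inl_injective h₁)
        have h₂ := congrArg Fin.val (Sum.inl_injective h₂)
        simp only [Fin.val_castSucc, Fin.val_succ] at h₁ h₂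
        omega
    have hsub : univ.image pathEdge ⊆ (pathCliqueGraph d m).edgeFinsetWithin S := by
      intro e he
      obtain ⟨i, -, rfl⟩ := mem_image.mp he
      simp [pathEdge, S, pathGraph_adj]
    calc d = #(univ.image pathEdge) := by
          rw [card_image_of_injective _ hinj, card_univ, Fintype.card_fin]
      _ ≤ _ := card_le_card hsub
  have hclique : #((pathCliqueGraph d m).edgeFinsetWithin Sᶜ) = m.choose 2 := by
    have : (pathCliqueGraph d m).IsClique (univ.map .inr : Finset (Fin (d + 1) ⊕ Fin m)) := by
      intro x hx y hy hxy
      obtain ⟨s, -, rfl⟩ := mem_map.mp (mem_coe.mp hx)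
      obtain ⟨t, -, rfl⟩ := mem_map.mp (mem_coe.mp hy)
      simpa using hxy
    rw [hSc, this.card_edgeFinsetWithin, card_map, card_univ, Fintype.card_fin]
  have hcross : ∀ t ∈ Sᶜ, 3 ≤ #{x ∈ S | (pathCliqueGraph d m).Adj t x} := by
    intro t ht
    rw [hSc] at ht
    obtain ⟨j, -, rfl⟩ := mem_map.mp ht
    calc 3 = #({.inl ⟨1, by omega⟩, .inl ⟨2, by omega⟩, .inl ⟨3, by omega⟩} :
          Finset (Fin (d + 1) ⊕ Fin m)) := by
          rw [card_insert_of_notMem, card_insert_of_notMem, card_singleton] <;> simp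
      _ ≤ _ := by
          refine card_le_card fun x hx => ?_
          simp only [mem_insert, mem_singleton] at hx
          rcases hx with rfl | rfl | rfl <;> simp [S]
  have hsum : 3 * m ≤ ∑ t ∈ Sᶜ, #{x ∈ S | (pathCliqueGraph d m).Adj t x} :=
    calc 3 * m = ∑ t ∈ Sᶜ, 3 := by
          rw [sum_const, hSc, card_map, card_univ, Fintype.card_fin, smul_eq_mul, mul_comm]
      _ ≤ _ := sum_le_sum hcross
  rw [card_edgeFinset_eq_add_sum S, hclique]
  omega

theorem card_edgeFinset (hd : 3 ≤ d) [Fintype (pathCliqueGraph d m).edgeSet] :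
    #(pathCliqueGraph d m).edgeFinset = d + m.choose 2 + 3 * m := by
  classical
  refine le_antisymm ?_ (add_choose_two_add_le_card_edgeFinset hd)
  have h := (connected (d := d) (m := m) (by omega)).card_edgeFinset_le
  rwa [diam_eq hd, Fintype.card_sum, Fintype.card_fin, Fintype.card_fin,
    show d + 1 + m - d - 1 = m by omega] at h

end pathCliqueGraph

end SimpleGraph

/-- Ore's theorem in the case `k = 1`: for `d ≥ 4` and `n ≥ d + 1`, the maximum size of a
simple connected graph of order `n` and diameter `d` equals
`d + C(n-d-1, 2) + 3(n-d-1)`. -/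
theorem max_size_connected_diam_ge_four (d n : ℕ) (hd : 4 ≤ d) (hn : d + 1 ≤ n) :
    (∀ (V : Type) [Fintype V] (G : SimpleGraph V),
        G.Connected → Fintype.card V = n → G.diam = d →
        G.edgeSet.ncard ≤ d + (n - d - 1) * (n - d - 1 - 1) / 2 + 3 * (n - d - 1)) ∧
    (∃ (V : Type) (_ : Fintype V) (G : SimpleGraph V),
        G.Connected ∧ Fintype.card V = n ∧ G.diam = d ∧
        G.edgeSet.ncard = d + (n - d - 1) * (n - d - 1 - 1) / 2 + 3 * (n - d - 1)) := by
  classical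
  rw [← Nat.choose_two_right]
  refine ⟨fun V _ G hc hcard hdiam => ?_, ?_⟩
  · rw [Set.ncard_eq_toFinset_card', ← hcard, ← hdiam]
    exact hc.card_edgeFinset_le
  · refine ⟨Fin (d + 1) ⊕ Fin (n - d - 1), inferInstance,
      SimpleGraph.pathCliqueGraph d (n - d - 1), SimpleGraph.pathCliqueGraph.connected (by omega),
      by simp; omega, SimpleGraph.pathCliqueGraph.diam_eq (by omega), ?_⟩
    rw [Set.ncard_eq_toFinset_card']
    exact SimpleGraph.pathCliqueGraph.card_edgeFinset (by omega)
end
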